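/- arXiv:2012.02289 — 7 statements merged into one kernel-verified Lean document; each statement's English description precedes it below -/
import Mathlib

section
/- Let G = (V, E⁺) be a dag with V finite and let P = {E⁺₁, …, E⁺ₘ} be a Reinhardt partition of E⁺. Then for each γ ∈ 𝕋^m there exists a function δ : V → 𝕋 such that, for each 1 ≤ j ≤ m and each edge (v, w) ∈ E⁺ⱼ, one has δ(v) = γⱼ · δ(w). -/
/-- A closed walk (cycle) `(v 0, v 1, …, v n, v (n+1) = v 0)` in the graph with
edge set `E ⊆ V × V`. -/
def IsCycle {V : Type*} (E : Set (V × V)) (n : ℕ) (v : ℕ → V) : Prop :=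
  v (n + 1) = v 0 ∧ ∀ t ≤ n, (v t, v (t + 1)) ∈ E

/-- `(V, Ep)` is a directed acyclic graph: no self-loops and no directed cycles. -/
def IsDag {V : Type*} (Ep : Set (V × V)) : Prop :=
  (∀ p ∈ Ep, p.1 ≠ p.2) ∧ ∀ (n : ℕ) (v : ℕ → V), ¬ IsCycle Ep n v

/-- `E = E⁺ ∪ E⁻` where `E⁻` consists of the reversed edges of `E⁺`. -/
def Esym {V : Type*} (Ep : Set (V × V)) : Set (V × V) :=
  Ep ∪ {p | (p.2, p.1) ∈ Ep}

/-- `P` is a partition of `Ep` into `m` (possibly empty) pairwise disjoint pieces. -/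
def IsPartitionOf {V : Type*} {m : ℕ} (Ep : Set (V × V)) (P : Fin m → Set (V × V)) : Prop :=
  (∀ j k, j ≠ k → P j ∩ P k = ∅) ∧ (⋃ j, P j) = Ep

/-- The cycle `(n, v)` is `P`-neutral: for each `j`, the number of its edges lying in
`E⁺ⱼ = P j` equals the number lying in `E⁻ⱼ` (the reverses of `P j`). -/
def IsNeutral {V : Type*} {m : ℕ} (P : Fin m → Set (V × V)) (n : ℕ) (v : ℕ → V) : Prop :=
  ∀ j, Set.ncard {t : ℕ | t ≤ n ∧ (v t, v (t + 1)) ∈ P j}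
     = Set.ncard {t : ℕ | t ≤ n ∧ (v (t + 1), v t) ∈ P j}

/-- `P` is a Reinhardt partition of `Ep`: it is a partition of `Ep` and every cycle in
`(V, E⁺ ∪ E⁻)` is `P`-neutral. -/
def IsReinhardtPartition {V : Type*} {m : ℕ} (Ep : Set (V × V))
    (P : Fin m → Set (V × V)) : Prop :=
  IsPartitionOf Ep P ∧ ∀ (n : ℕ) (v : ℕ → V), IsCycle (Esym Ep) n v → IsNeutral P n v

/-- `γ ∈ 𝕋^m` is independent: `∏ γⱼ^{ρⱼ} = 1` for integers `ρⱼ` forces `ρ = 0`. -/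
def IsIndependentTuple {m : ℕ} (γ : Fin m → ℂ) : Prop :=
  ∀ ρ : Fin m → ℤ, (∏ j, γ j ^ ρ j) = 1 → ∀ j, ρ j = 0

section Aux

variable {V : Type*} {m : ℕ}

lemma esym_mono {Ep Ep' : Set (V × V)} (h : Ep' ⊆ Ep) : Esym Ep' ⊆ Esym Ep := by
  rintro p (hp | hp)
  · exact Or.inl (h hp)
  · exact Or.inr (h hp)

lemma isCycle_mono {E E' : Set (V × V)} (h : E' ⊆ E) {n : ℕ} {v : ℕ → V}
    (hc : IsCycle E' n v) : IsCycle E n v :=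
  ⟨hc.1, fun t ht => h (hc.2 t ht)⟩

lemma no_two_cycle {Ep : Set (V × V)} (hdag : IsDag Ep) {a b : V}
    (h1 : (a, b) ∈ Ep) (h2 : (b, a) ∈ Ep) : False := by
  apply hdag.2 1 (fun s => if s % 2 = 0 then a else b)
  constructor
  · norm_num
  · intro t ht
    interval_cases t <;> simpa

lemma esym_symm {Ep : Set (V × V)} {x y : V} (h : (x, y) ∈ Esym Ep) : (y, x) ∈ Esym Ep := by
  rcases h with h | h
  · exact Or.inr h
  · exact Or.inl h

-- The weight of an edge: `γ j` on `P j`, `(γ j)⁻¹` on the reverse of `P j`, `1` otherwise.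
open Classical in
noncomputable def wt (P : Fin m → Set (V × V)) (γ : Fin m → ℂ) (p : V × V) : ℂ :=
  if h : ∃ j, p ∈ P j then γ h.choose
  else if h : ∃ j, (p.2, p.1) ∈ P j then (γ h.choose)⁻¹ else 1

lemma wt_fwd {P : Fin m → Set (V × V)} (hdisj : ∀ j k, j ≠ k → P j ∩ P k = ∅)
    {γ : Fin m → ℂ} {p : V × V} {j : Fin m} (hp : p ∈ P j) : wt P γ p = γ j := by
  have h : ∃ j, p ∈ P j := ⟨j, hp⟩
  rw [wt, dif_pos h]
  congr 1
  by_contra hne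
  have := hdisj _ _ hne
  have : p ∈ P h.choose ∩ P j := ⟨h.choose_spec, hp⟩
  rw [hdisj _ _ hne] at this
  exact this

lemma wt_rev {P : Fin m → Set (V × V)} (hdisj : ∀ j k, j ≠ k → P j ∩ P k = ∅)
    {γ : Fin m → ℂ} {p : V × V} (hnf : ¬ ∃ j, p ∈ P j) {j : Fin m}
    (hp : (p.2, p.1) ∈ P j) : wt P γ p = (γ j)⁻¹ := by
  have h : ∃ j, (p.2, p.1) ∈ P j := ⟨j, hp⟩
  rw [wt, dif_neg hnf, dif_pos h]
  congr 2
  by_contra hne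
  have : (p.2, p.1) ∈ P h.choose ∩ P j := ⟨h.choose_spec, hp⟩
  rw [hdisj _ _ hne] at this
  exact this

/-- Key lemma: the weight product along a neutral closed walk is `1`. -/
lemma cycle_prod_eq_one {Ep : Set (V × V)} {P : Fin m → Set (V × V)} (hdag : IsDag Ep)
    (hpart : IsPartitionOf Ep P) {γ : Fin m → ℂ} (hγ : ∀ j, γ j ≠ 0)
    {n : ℕ} {v : ℕ → V} (hc : IsCycle (Esym Ep) n v) (hne : IsNeutral P n v) :
    ∏ t ∈ Finset.range (n + 1), wt P γ (v t, v (t + 1)) = 1 := by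
  classical
  have hsub : ∀ j, P j ⊆ Ep := fun j => hpart.2 ▸ Set.subset_iUnion P j
  set F : Fin m × Bool → Finset ℕ := fun jb =>
    (Finset.range (n + 1)).filter
      (fun t => (cond jb.2 (v t, v (t + 1)) (v (t + 1), v t)) ∈ P jb.1) with hF
  have hdisjF : ((Finset.univ : Finset (Fin m × Bool)) : Set (Fin m × Bool)).PairwiseDisjoint F := by
    rintro ⟨j, b⟩ - ⟨k, c⟩ - hne'
    refine Finset.disjoint_left.2 fun t ht ht' => ?_
    simp only [hF, Finset.mem_filter] at ht ht'
    rcases Bool.eq_or_eq_not b c with rfl | rfl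
    · have hjk : j ≠ k := by simpa using hne'
      have : (cond b (v t, v (t + 1)) (v (t + 1), v t)) ∈ P j ∩ P k := ⟨ht.2, ht'.2⟩
      rw [hpart.1 j k hjk] at this
      exact this
    · cases c <;> simp only [Bool.not_true, Bool.not_false, cond] at ht ht' <;>
        exact no_two_cycle hdag (hsub _ ht.2) (hsub _ ht'.2)
  have hcover : Finset.univ.biUnion F = Finset.range (n + 1) := by
    ext t
    simp only [Finset.mem_biUnion, Finset.mem_univ, true_and, hF, Finset.mem_filter]
    constructor
    · rintro ⟨jb, ht, -⟩; exact ht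
    · intro ht
      have hedge := hc.2 t (Nat.lt_succ_iff.1 (Finset.mem_range.1 ht))
      rcases hedge with hedge | hedge
      · rw [← hpart.2] at hedge
        obtain ⟨j, hj⟩ := Set.mem_iUnion.1 hedge
        exact ⟨(j, true), ht, hj⟩
      · rw [← hpart.2] at hedge
        obtain ⟨j, hj⟩ := Set.mem_iUnion.1 hedge
        exact ⟨(j, false), ht, hj⟩
  calc ∏ t ∈ Finset.range (n + 1), wt P γ (v t, v (t + 1))
      = ∏ t ∈ Finset.univ.biUnion F, wt P γ (v t, v (t + 1)) := by rw [hcover]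
    _ = ∏ jb : Fin m × Bool, ∏ t ∈ F jb, wt P γ (v t, v (t + 1)) :=
        Finset.prod_biUnion hdisjF
    _ = ∏ j : Fin m, ((∏ t ∈ F (j, true), wt P γ (v t, v (t + 1))) *
          ∏ t ∈ F (j, false), wt P γ (v t, v (t + 1))) := by
        rw [Fintype.prod_prod_type]
        exact Finset.prod_congr rfl fun j _ => by rw [Fintype.prod_bool]
    _ = 1 := by
        apply Finset.prod_eq_one
        intro j _
        have h1 : ∏ t ∈ F (j, true), wt P γ (v t, v (t + 1)) = γ j ^ (F (j, true)).card := by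
          rw [Finset.prod_congr rfl (fun t ht => ?_), Finset.prod_const]
          simp only [hF, Finset.mem_filter, cond] at ht
          exact wt_fwd hpart.1 ht.2
        have h2 : ∏ t ∈ F (j, false), wt P γ (v t, v (t + 1)) = ((γ j)⁻¹) ^ (F (j, false)).card := by
          rw [Finset.prod_congr rfl (fun t ht => ?_), Finset.prod_const]
          simp only [hF, Finset.mem_filter, cond] at ht
          refine wt_rev hpart.1 ?_ ht.2
          rintro ⟨k, hk⟩
          exact no_two_cycle hdag (hsub _ hk) (hsub _ ht.2)
        have hcards : (F (j, true)).card = (F (j, false)).card := by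
          have e1 : {t : ℕ | t ≤ n ∧ (v t, v (t + 1)) ∈ P j} = ↑(F (j, true)) := by
            ext t; simp [hF, Nat.lt_succ_iff, and_comm]
          have e2 : {t : ℕ | t ≤ n ∧ (v (t + 1), v t) ∈ P j} = ↑(F (j, false)) := by
            ext t; simp [hF, Nat.lt_succ_iff, and_comm]
          have := hne j
          rwa [e1, e2, Set.ncard_coe_finset, Set.ncard_coe_finset] at this
        rw [h1, h2, hcards, inv_pow, mul_inv_cancel₀ (pow_ne_zero _ (hγ j))]

lemma walk_of_reach {E : Set (V × V)} {x y : V}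
    (h : Relation.ReflTransGen (fun a b => (a, b) ∈ E) x y) :
    ∃ (n : ℕ) (w : ℕ → V), w 0 = x ∧ w n = y ∧ ∀ t < n, (w t, w (t + 1)) ∈ E := by
  induction h with
  | refl => exact ⟨0, fun _ => x, rfl, rfl, fun t ht => absurd ht (Nat.not_lt_zero t)⟩
  | @tail b c hxb hbc ih =>
    obtain ⟨n, w, hw0, hwn, hstep⟩ := ih
    refine ⟨n + 1, fun t => if t ≤ n then w t else c, by simpa using hw0, by simp, ?_⟩
    intro t ht
    rcases Nat.lt_or_ge t n with ht' | ht'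
    · simp only [if_pos (Nat.le_of_lt ht'), if_pos (Nat.succ_le_of_lt ht')]
      exact hstep t ht'
    · have : t = n := Nat.le_antisymm (Nat.lt_succ_iff.1 ht) ht'
      subst this
      simp only [le_refl, if_pos, Nat.not_le.2 (Nat.lt_succ_self t), if_neg]
      rw [hwn]
      exact hbc

lemma walk_transport {E : Set (V × V)} {δ : V → ℂ} {f : V × V → ℂ}
    (hstep : ∀ x y, (x, y) ∈ E → δ x = f (x, y) * δ y)
    (n : ℕ) (w : ℕ → V) (hw : ∀ t < n, (w t, w (t + 1)) ∈ E) :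
    δ (w 0) = (∏ t ∈ Finset.range n, f (w t, w (t + 1))) * δ (w n) := by
  induction n with
  | zero => simp
  | succ n ih =>
    rw [Finset.prod_range_succ, mul_assoc,
      ← hstep (w n) (w (n + 1)) (hw n (Nat.lt_succ_self n))]
    exact ih fun t ht => hw t (ht.trans (Nat.lt_succ_self n))

end Aux

section Main

variable {V : Type*} [Finite V] {m : ℕ}

theorem reinhardt_aux (γ : Fin m → ℂ) (hγ : ∀ j, ‖γ j‖ = 1) :
    ∀ (N : ℕ) (Ep : Set (V × V)) (P : Fin m → Set (V × V)), Ep.ncard ≤ N →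
    IsDag Ep → IsReinhardtPartition Ep P →
    ∃ δ : V → ℂ, (∀ x, ‖δ x‖ = 1) ∧
      ∀ (j : Fin m), ∀ p ∈ P j, δ p.1 = γ j * δ p.2 := by
  have hγ0 : ∀ j, γ j ≠ 0 := fun j h => by
    have := hγ j; rw [h] at this; simp at this
  intro N
  induction N with
  | zero =>
    intro Ep P hcard hdag hP
    have : Ep = ∅ := by
      rw [← Set.ncard_eq_zero (Set.toFinite Ep)]
      omega
    subst this
    refine ⟨fun _ => 1, fun x => by simp, fun j p hp => absurd (hP.1.2 ▸ Set.mem_iUnion.2 ⟨j, hp⟩) (Set.notMem_empty p)⟩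
  | succ N ih =>
    intro Ep P hcard hdag hP
    classical
    rcases Set.eq_empty_or_nonempty Ep with rfl | ⟨e, he⟩
    · refine ⟨fun _ => 1, fun x => by simp, fun j p hp => absurd (hP.1.2 ▸ Set.mem_iUnion.2 ⟨j, hp⟩) (Set.notMem_empty p)⟩
    obtain ⟨j0, hj0⟩ := Set.mem_iUnion.1 (hP.1.2 ▸ he : e ∈ ⋃ j, P j)
    set Ep' := Ep \ {e} with hEp'
    set P' := fun j => P j \ {e} with hP'
    have hsub : ∀ j, P j ⊆ Ep := fun j => hP.1.2 ▸ Set.subset_iUnion P j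
    have hEp'sub : Ep' ⊆ Ep := Set.diff_subset
    -- no edge of `Esym Ep'` equals `e` or its reverse:
    have hkey : ∀ a b : V, (a, b) ∈ Esym Ep' → (a, b) ≠ e ∧ (b, a) ≠ e := by
      rintro a b (hab | hab)
      · refine ⟨hab.2, fun hrev => ?_⟩
        exact no_two_cycle hdag (hrev ▸ he) hab.1
      · simp only [Set.mem_setOf_eq] at hab
        refine ⟨fun heq => no_two_cycle hdag (heq ▸ he) hab.1, hab.2⟩
    have hdag' : IsDag Ep' := by
      constructor
      · exact fun p hp => hdag.1 p (hEp'sub hp)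
      · exact fun n v hc => hdag.2 n v (isCycle_mono hEp'sub hc)
    have hpart' : IsReinhardtPartition Ep' P' := by
      refine ⟨⟨fun j k hjk => ?_, ?_⟩, ?_⟩
      · have := hP.1.1 j k hjk
        rw [hP']
        rw [Set.eq_empty_iff_forall_notMem] at this ⊢
        exact fun p hp => this p ⟨hp.1.1, hp.2.1⟩
      · rw [hP', hEp', ← hP.1.2, ← Set.iUnion_diff]
      · intro n v hc
        have hcyc : IsCycle (Esym Ep) n v := isCycle_mono (esym_mono hEp'sub) hc
        have hneut := hP.2 n v hcyc
        intro j
        have e1 : {t : ℕ | t ≤ n ∧ (v t, v (t + 1)) ∈ P' j}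
            = {t : ℕ | t ≤ n ∧ (v t, v (t + 1)) ∈ P j} := by
          ext t
          simp only [Set.mem_setOf_eq, hP', Set.mem_diff, Set.mem_singleton_iff]
          refine ⟨fun h => ⟨h.1, h.2.1⟩, fun h => ⟨h.1, h.2, (hkey _ _ (hc.2 t h.1)).1⟩⟩
        have e2 : {t : ℕ | t ≤ n ∧ (v (t + 1), v t) ∈ P' j}
            = {t : ℕ | t ≤ n ∧ (v (t + 1), v t) ∈ P j} := by
          ext t
          simp only [Set.mem_setOf_eq, hP', Set.mem_diff, Set.mem_singleton_iff]
          refine ⟨fun h => ⟨h.1, h.2.1⟩, fun h => ⟨h.1, h.2, (hkey _ _ (hc.2 t h.1)).2⟩⟩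
        rw [e1, e2]
        exact hneut j
    have hcard' : Ep'.ncard ≤ N := by
      have h := Set.ncard_diff_singleton_lt_of_mem he (Set.toFinite Ep)
      rw [← hEp'] at h
      omega
    obtain ⟨δ', hδ'1, hδ'2⟩ := ih Ep' P' hcard' hdag' hpart'
    have hδ'0 : ∀ x, δ' x ≠ 0 := fun x h => by
      have := hδ'1 x; rw [h] at this; simp at this
    -- transport along edges of `Esym Ep'`
    have hstep : ∀ x y, (x, y) ∈ Esym Ep' → δ' x = wt P γ (x, y) * δ' y := by
      rintro x y (hxy | hxy)
      · obtain ⟨j, hj⟩ := Set.mem_iUnion.1 (hP.1.2 ▸ hxy.1 : (x, y) ∈ ⋃ j, P j)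
        rw [wt_fwd hP.1.1 hj]
        exact hδ'2 j (x, y) ⟨hj, hxy.2⟩
      · simp only [Set.mem_setOf_eq] at hxy
        obtain ⟨j, hj⟩ := Set.mem_iUnion.1 (hP.1.2 ▸ hxy.1 : (y, x) ∈ ⋃ j, P j)
        have hnf : ¬ ∃ k, (x, y) ∈ P k := by
          rintro ⟨k, hk⟩
          exact no_two_cycle hdag (hsub _ hk) (hsub _ hj)
        rw [wt_rev hP.1.1 hnf hj]
        have h := hδ'2 j (y, x) ⟨hj, hxy.2⟩
        simp only at h
        rw [h, ← mul_assoc, inv_mul_cancel₀ (hγ0 j), one_mul]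
    set Reach := Relation.ReflTransGen (fun a b : V => (a, b) ∈ Esym Ep') with hReach
    by_cases hr : Reach e.1 e.2
    · -- δ' already works for e
      have hr' : Reach e.2 e.1 :=
        (@Relation.ReflTransGen.symmetric _ _ ⟨fun a b hab => esym_symm hab⟩).symm _ _ hr
      obtain ⟨n, w, hw0, hwn, hws⟩ := walk_of_reach hr'
      -- build the closed walk e.1 → e.2 = w 0 → … → w n = e.1
      set c : ℕ → V := fun t => if t = 0 then e.1 else w (t - 1) with hc
      have hcyc : IsCycle (Esym Ep) n c := by
        constructor
        · simp [hc, hwn]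
        · intro t ht
          rcases Nat.eq_zero_or_pos t with rfl | htpos
          · simp only [hc, if_pos rfl, if_neg (Nat.one_ne_zero)]
            simpa [hw0] using (show e ∈ Esym Ep from Or.inl he)
          · have h1 : t ≠ 0 := by omega
            simp only [hc, if_neg h1, if_neg (Nat.succ_ne_zero t)]
            have : t - 1 < n := by omega
            have := esym_mono hEp'sub (hws (t - 1) this)
            simpa [Nat.sub_add_cancel (Nat.one_le_iff_ne_zero.2 h1)] using this
      have hneut := hP.2 n c hcyc
      have hprod := cycle_prod_eq_one hdag hP.1 hγ0 hcyc hneut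
      -- split off the first factor
      rw [Finset.prod_range_succ'] at hprod
      have hfirst : wt P γ (c 0, c 1) = γ j0 := by
        have h0 : c 0 = e.1 := by simp [hc]
        have h1 : c 1 = e.2 := by simp [hc, hw0]
        rw [h0, h1, Prod.mk.eta]
        exact wt_fwd hP.1.1 hj0
      have hQ : ∀ t < n, (c (t + 1), c (t + 1 + 1)) = (w t, w (t + 1)) := by
        intro t ht
        simp [hc]
      have htrans := walk_transport hstep n w hws
      rw [hw0, hwn] at htrans
      -- hprod : (∏ t in range n, wt (c (t+1), c (t+2))) * wt (c 0, c 1) = 1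
      have hprod' : (∏ t ∈ Finset.range n, wt P γ (w t, w (t + 1))) * γ j0 = 1 := by
        have hpc : (∏ t ∈ Finset.range n, wt P γ (c (t + 1), c (t + 1 + 1)))
            = ∏ t ∈ Finset.range n, wt P γ (w t, w (t + 1)) :=
          Finset.prod_congr rfl fun t ht => by rw [hQ t (Finset.mem_range.1 ht)]
        rw [← hpc, ← hfirst]
        exact hprod
      refine ⟨δ', hδ'1, fun j p hp => ?_⟩
      by_cases hpe : p = e
      · have hj : j = j0 := by
          by_contra hne
          have hmem : p ∈ P j ∩ P j0 := ⟨hp, hpe ▸ hj0⟩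
          rw [hP.1.1 j j0 hne] at hmem
          exact hmem
        rw [hpe, hj, htrans, ← mul_assoc,
          mul_comm (γ j0) (∏ t ∈ Finset.range n, wt P γ (w t, w (t + 1))), hprod', one_mul]
      · exact hδ'2 j p ⟨hp, hpe⟩
    · -- rescale on the reachable component of e.1
      set cst : ℂ := γ j0 * δ' e.2 / δ' e.1 with hcst
      have hcst1 : ‖cst‖ = 1 := by
        simp [hcst, norm_div, norm_mul, hγ (j0), hδ'1]
      refine ⟨fun x => if Reach e.1 x then cst * δ' x else δ' x, fun x => ?_, fun j p hp => ?_⟩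
      · beta_reduce
        by_cases h : Reach e.1 x
        · rw [if_pos h, norm_mul, hcst1, hδ'1, mul_one]
        · rw [if_neg h]; exact hδ'1 x
      · beta_reduce
        by_cases hpe : p = e
        · have hj : j = j0 := by
            by_contra hne
            have hmem : p ∈ P j ∩ P j0 := ⟨hp, hpe ▸ hj0⟩
            rw [hP.1.1 j j0 hne] at hmem
            exact hmem
          rw [hpe, hj, if_pos Relation.ReflTransGen.refl, if_neg hr, hcst]
          exact div_mul_cancel₀ _ (hδ'0 e.1)
        · have hp' : (p.1, p.2) ∈ Esym Ep' := Or.inl ⟨hsub j hp, hpe⟩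
          have hiff : Reach e.1 p.1 ↔ Reach e.1 p.2 := by
            constructor
            · intro h; exact h.tail hp'
            · intro h; exact h.tail (esym_symm hp')
          have hrec := hδ'2 j p ⟨hp, hpe⟩
          by_cases h : Reach e.1 p.1
          · rw [if_pos h, if_pos (hiff.1 h), hrec]; ring
          · rw [if_neg h, if_neg (fun h' => h (hiff.2 h')), hrec]

end Main

/-- **Proposition.** If `P = {E⁺₁, …, E⁺ₘ}` is a Reinhardt partition of the dag
`G = (V, E⁺)` with `V` finite, then for each `γ ∈ 𝕋^m` there is a `δ : V → 𝕋` such that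
`δ v = γⱼ · δ w` for each `1 ≤ j ≤ m` and each `(v, w) ∈ E⁺ⱼ`. -/
theorem reinhardt_partition_delta {V : Type*} [Finite V] {m : ℕ} (Ep : Set (V × V))
    (P : Fin m → Set (V × V)) (hdag : IsDag Ep) (hP : IsReinhardtPartition Ep P)
    (γ : Fin m → ℂ) (hγ : ∀ j, ‖γ j‖ = 1) :
    ∃ δ : V → ℂ, (∀ x, ‖δ x‖ = 1) ∧
      ∀ (j : Fin m), ∀ p ∈ P j, δ p.1 = γ j * δ p.2 := by
  exact reinhardt_aux γ hγ Ep.ncard Ep P le_rfl hdag hP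
end

section
/- Let A = (A₁, …, A_g) ∈ M_d(ℂ)^g. Suppose there exist a positive integer m and pairwise orthogonal, nonzero orthogonal projections P₁, …, Pₘ ∈ M_d(ℂ) with P₁ + ⋯ + Pₘ = I_d such that, setting V = {1, …, m}, I⁺ₛ = {(j,k) ∈ V × V : Pⱼ Aₛ Pₖ ≠ 0} for 1 ≤ s ≤ g, and E⁺ = ∪ₛ I⁺ₛ, the directed graph (V, E⁺) is a dag, the sets I⁺₁, …, I⁺_g are pairwise disjoint, and {I⁺₁, …, I⁺_g} is a Reinhardt partition of E⁺. Then the free spectrahedron 𝔇_A is Reinhardt. -/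
open Matrix Kronecker
open scoped ComplexOrder

/-- The homogeneous linear matrix pencil `Λ_A(X) = Σₛ Aₛ ⊗ Xₛ` (Kronecker product). -/
noncomputable def LamA {d g N : ℕ} (A : Fin g → Matrix (Fin d) (Fin d) ℂ)
    (X : Fin g → Matrix (Fin N) (Fin N) ℂ) :
    Matrix (Fin d × Fin N) (Fin d × Fin N) ℂ :=
  ∑ s, (A s) ⊗ₖ (X s)

/-- The monic linear pencil `L_A(X) = I − Λ_A(X) − Λ_A(X)*`. -/
noncomputable def Lpencil {d g N : ℕ} (A : Fin g → Matrix (Fin d) (Fin d) ℂ)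
    (X : Fin g → Matrix (Fin N) (Fin N) ℂ) :
    Matrix (Fin d × Fin N) (Fin d × Fin N) ℂ :=
  1 - LamA A X - (LamA A X)ᴴ

/-- The free spectrahedron at level `N`: `𝔇_A[N] = {X : L_A(X) ⪰ 0}`. -/
def memDA {d g N : ℕ} (A : Fin g → Matrix (Fin d) (Fin d) ℂ)
    (X : Fin g → Matrix (Fin N) (Fin N) ℂ) : Prop :=
  (Lpencil A X).PosSemidef

/-- The free spectrahedron `𝔇_A` is Reinhardt: for every `N`, every `X ∈ 𝔇_A[N]` and
every `γ ∈ 𝕋^g`, the tuple `γ·X = (γ₁X₁, …, γ_g X_g)` lies in `𝔇_A[N]`. -/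
def DAIsReinhardt {d g : ℕ} (A : Fin g → Matrix (Fin d) (Fin d) ℂ) : Prop :=
  ∀ (N : ℕ) (X : Fin g → Matrix (Fin N) (Fin N) ℂ), memDA A X →
    ∀ γ : Fin g → ℂ, (∀ s, ‖γ s‖ = 1) → memDA A (fun s => γ s • X s)

/-- The edge sets `I⁺ₛ = {(j,k) : Pⱼ Aₛ Pₖ ≠ 0}` determined by a family of projections. -/
def Ipedges {d g m : ℕ} (A : Fin g → Matrix (Fin d) (Fin d) ℂ)
    (P : Fin m → Matrix (Fin d) (Fin d) ℂ) (s : Fin g) : Set (Fin m × Fin m) :=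
  {p : Fin m × Fin m | P p.1 * A s * P p.2 ≠ 0}

section WalkMachinery

section Walks

variable {V : Type*} {E : Set (V × V)} {W : V → V → ℂ} {a b c : V} {n n' : ℕ} {v v' : ℕ → V}

set_option autoImplicit false

/-- A walk of `n` edges from `a` to `b` in the graph with edge set `E`. -/
def IsWalk (E : Set (V × V)) (a b : V) (n : ℕ) (v : ℕ → V) : Prop :=
  v 0 = a ∧ v n = b ∧ ∀ t < n, (v t, v (t + 1)) ∈ E

/-- The product of the weights along a walk. -/
def wprod (W : V → V → ℂ) (n : ℕ) (v : ℕ → V) : ℂ :=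
  ∏ t ∈ Finset.range n, W (v t) (v (t + 1))

lemma abs_wprod (habs : ∀ j k, ‖W j k‖ = 1) (n : ℕ) (v : ℕ → V) :
    ‖wprod W n v‖ = 1 := by
  rw [wprod, norm_prod]
  simp [habs]

lemma exists_walk (h : Relation.ReflTransGen (fun j k => (j, k) ∈ E) a b) :
    ∃ n v, IsWalk E a b n v := by
  induction h with
  | refl => exact ⟨0, fun _ => a, rfl, rfl, by simp⟩
  | @tail b' c' h₁ h₂ ih =>
    obtain ⟨n, v, hv0, hvn, hve⟩ := ih
    refine ⟨n + 1, fun t => if t ≤ n then v t else c', by simpa using hv0, by simp, ?_⟩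
    intro t ht
    rcases Nat.lt_succ_iff_lt_or_eq.mp ht with ht | ht
    · simpa [Nat.le_of_lt ht, Nat.succ_le_of_lt ht] using hve t ht
    · subst ht; simpa [hvn] using h₂

lemma exists_concat (h1 : IsWalk E a b n v) (h2 : IsWalk E b c n' v') :
    ∃ u, IsWalk E a c (n + n') u ∧
      wprod W (n + n') u = wprod W n v * wprod W n' v' := by
  obtain ⟨hv0, hvn, hve⟩ := h1
  obtain ⟨hv0', hvn', hve'⟩ := h2
  have key : ∀ t < n, (if t < n then v t else v' (t - n)) = v t := fun t ht => if_pos ht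
  have key2 : ∀ t, (if n + t < n then v (n + t) else v' (n + t - n)) = v' t := by
    intro t; rw [if_neg (by omega), Nat.add_sub_cancel_left]
  have bridge : ∀ t < n, (if t + 1 < n then v (t + 1) else v' (t + 1 - n)) = v (t + 1) := by
    intro t ht
    rcases lt_or_eq_of_le (Nat.succ_le_of_lt ht) with h | h
    · exact if_pos h
    · have h' : t + 1 = n := h
      rw [if_neg (by omega), h', Nat.sub_self, hv0', ← hvn]
  refine ⟨fun t => if t < n then v t else v' (t - n), ⟨?_, ?_, ?_⟩, ?_⟩
  · rcases Nat.eq_zero_or_pos n with h | h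
    · simp [h, hv0', ← hvn, ← hv0, h]
    · simpa [h] using hv0
  · beta_reduce
    rw [if_neg (by omega), Nat.add_sub_cancel_left, hvn']
  · intro t ht
    beta_reduce
    rcases Nat.lt_or_ge t n with h | h
    · rw [key t h, bridge t h]; exact hve t h
    · obtain ⟨r, rfl⟩ := Nat.exists_eq_add_of_le h
      have h3 : n + r + 1 = n + (r + 1) := by omega
      rw [key2 r, h3, key2 (r + 1)]
      exact hve' r (by omega)
  · rw [wprod, wprod, wprod, Finset.prod_range_add]
    congr 1
    · refine Finset.prod_congr rfl fun t ht => ?_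
      have ht' := Finset.mem_range.mp ht
      rw [key t ht', bridge t ht']
    · refine Finset.prod_congr rfl fun t ht => ?_
      have : n + t + 1 = n + (t + 1) := by omega
      rw [key2 t, this, key2 (t + 1)]

end Walks

lemma exists_reverse {V : Type*} {E : Set (V × V)} {W : V → V → ℂ} {a b : V} {n : ℕ}
    {v : ℕ → V}
    (hE : ∀ p ∈ E, (p.2, p.1) ∈ E)
    (hinv : ∀ j k, (j, k) ∈ E → W k j = (W j k)⁻¹)
    (h : IsWalk E a b n v) :
    ∃ u, IsWalk E b a n u ∧ wprod W n u = (wprod W n v)⁻¹ := by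
  obtain ⟨hv0, hvn, hve⟩ := h
  refine ⟨fun t => v (n - t), ⟨by simp [hvn], by simp [hv0], ?_⟩, ?_⟩
  · intro t ht
    beta_reduce
    have h1 : n - t = (n - 1 - t) + 1 := by omega
    have h2 : n - (t + 1) = n - 1 - t := by omega
    rw [h1, h2]
    exact hE _ (hve (n - 1 - t) (by omega))
  · rw [wprod, wprod, ← Finset.prod_inv_distrib]
    conv_rhs => rw [← Finset.prod_range_reflect]
    refine Finset.prod_congr rfl fun t ht => ?_
    have ht' := Finset.mem_range.mp ht
    have h1 : n - t = (n - 1 - t) + 1 := by omega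
    have h2 : n - (t + 1) = n - 1 - t := by omega
    rw [h1, h2]
    exact hinv _ _ (hve (n - 1 - t) (by omega))

lemma wprod_closed (hcyc : ∀ (k : ℕ) (v : ℕ → V), IsCycle E k v →
      ∏ t ∈ Finset.range (k + 1), W (v t) (v (t + 1)) = 1)
    (h : IsWalk E a a n v) : wprod W n v = 1 := by
  obtain ⟨hv0, hvn, hve⟩ := h
  cases n with
  | zero => simp [wprod]
  | succ k =>
    simpa [wprod] using hcyc k v ⟨by rw [hvn, hv0], fun t ht => hve t (by omega)⟩

lemma wprod_welldef {n n' : ℕ} {v v' : ℕ → V}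
    (hE : ∀ p ∈ E, (p.2, p.1) ∈ E)
    (habs : ∀ j k, ‖W j k‖ = 1)
    (hinv : ∀ j k, (j, k) ∈ E → W k j = (W j k)⁻¹)
    (hcyc : ∀ (k : ℕ) (v : ℕ → V), IsCycle E k v →
      ∏ t ∈ Finset.range (k + 1), W (v t) (v (t + 1)) = 1)
    (h1 : IsWalk E a b n v) (h2 : IsWalk E a b n' v') :
    wprod W n v = wprod W n' v' := by
  obtain ⟨u, hu, hup⟩ := exists_reverse hE hinv h2
  obtain ⟨w, hw, hwp⟩ := exists_concat (W := W) h1 hu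
  have hone := wprod_closed hcyc hw
  rw [hup, hone] at hwp
  have hne : wprod W n' v' ≠ 0 := by
    intro h0
    have := abs_wprod habs n' v'
    rw [h0] at this; simp at this
  field_simp at hwp
  exact hwp.symm

lemma exists_potential {V : Type*} [Fintype V] [LinearOrder V]
    {E : Set (V × V)} {W : V → V → ℂ}
    (hE : ∀ p ∈ E, (p.2, p.1) ∈ E)
    (habs : ∀ j k, ‖W j k‖ = 1)
    (hinv : ∀ j k, (j, k) ∈ E → W k j = (W j k)⁻¹)
    (hcyc : ∀ (k : ℕ) (v : ℕ → V), IsCycle E k v →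
      ∏ t ∈ Finset.range (k + 1), W (v t) (v (t + 1)) = 1) :
    ∃ μ : V → ℂ, (∀ j, ‖μ j‖ = 1) ∧
      ∀ j k, (j, k) ∈ E → μ j = W j k * μ k := by
  classical
  have hRsymm : ∀ {j k : V}, (j, k) ∈ E → (k, j) ∈ E := fun h => hE _ h
  have hReachSymm : ∀ {j k : V},
      Relation.ReflTransGen (fun j k => (j, k) ∈ E) j k →
      Relation.ReflTransGen (fun j k => (j, k) ∈ E) k j :=
    fun h => (@Relation.ReflTransGen.stdSymm _ _ ⟨fun _ _ hr => hRsymm hr⟩).symm _ _ h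
  have hcompeq : ∀ j k : V, (j, k) ∈ E →
      (Finset.univ.filter (Relation.ReflTransGen (fun a b => (a, b) ∈ E) j))
        = (Finset.univ.filter (Relation.ReflTransGen (fun a b => (a, b) ∈ E) k)) := by
    intro j k hjk
    ext x
    simp only [Finset.mem_filter, Finset.mem_univ, true_and]
    exact ⟨fun h => Relation.ReflTransGen.head (hRsymm hjk) h,
      fun h => Relation.ReflTransGen.head hjk h⟩
  have hmem : ∀ j : V, j ∈ Finset.univ.filter
      (Relation.ReflTransGen (fun a b => (a, b) ∈ E) j) := by
    intro j
    simp only [Finset.mem_filter, Finset.mem_univ, true_and]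
    exact Relation.ReflTransGen.refl
  set rep : V → V := fun j =>
    (Finset.univ.filter (Relation.ReflTransGen (fun a b => (a, b) ∈ E) j)).min'
      ⟨j, hmem j⟩ with hrep
  have hmin' : ∀ {s t : Finset V} (h : s = t) (h1 : s.Nonempty),
      s.min' h1 = t.min' (h ▸ h1) := by intro s t h h1; subst h; rfl
  have hrepeq : ∀ j k : V, (j, k) ∈ E → rep j = rep k := by
    intro j k h
    exact hmin' (hcompeq j k h) _
  have hreachrep : ∀ j, Relation.ReflTransGen (fun a b => (a, b) ∈ E) j (rep j) := by
    intro j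
    have := Finset.min'_mem (Finset.univ.filter
      (Relation.ReflTransGen (fun a b => (a, b) ∈ E) j)) ⟨j, hmem j⟩
    simpa using this
  choose nn w hw using fun j => exists_walk (hreachrep j)
  refine ⟨fun j => wprod W (nn j) (w j), fun j => abs_wprod habs _ _, ?_⟩
  intro j k hjk
  have hsingle : IsWalk E j k 1 (fun t => if t = 0 then j else k) := by
    refine ⟨by simp, by simp, ?_⟩
    intro t ht
    interval_cases t
    simpa using hjk
  obtain ⟨u, hu, hup⟩ := exists_concat (W := W) hsingle (hw k)
  have hu' : IsWalk E j (rep j) (1 + nn k) u := by rwa [hrepeq j k hjk]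
  have hkey := wprod_welldef hE habs hinv hcyc (hw j) hu'
  beta_reduce
  rw [hkey, hup]
  congr 1
  simp [wprod]

open Classical in
noncomputable def Wfun {m g : ℕ} (I : Fin g → Set (Fin m × Fin m)) (γ : Fin g → ℂ) :
    Fin m → Fin m → ℂ := fun j k =>
  if h : (j, k) ∈ ⋃ s, I s then γ (Set.mem_iUnion.mp h).choose
  else if h' : (k, j) ∈ ⋃ s, I s then (γ (Set.mem_iUnion.mp h').choose)⁻¹
  else 1

lemma exists_mu {m g : ℕ} (I : Fin g → Set (Fin m × Fin m)) (γ : Fin g → ℂ)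
    (hγ : ∀ s, ‖γ s‖ = 1)
    (hdisj : ∀ s t, s ≠ t → I s ∩ I t = ∅)
    (hno2 : ∀ {j k : Fin m}, (j, k) ∈ ⋃ s, I s → (k, j) ∉ ⋃ s, I s)
    (hneu : ∀ (n : ℕ) (v : ℕ → Fin m), IsCycle (Esym (⋃ s, I s)) n v → IsNeutral I n v) :
    ∃ μ : Fin m → ℂ, (∀ j, ‖μ j‖ = 1) ∧
      ∀ (s : Fin g) (j k : Fin m), (j, k) ∈ I s → μ j = γ s * μ k := by
  classical
  set W := Wfun I γ with hWdef
  have hγne : ∀ s, γ s ≠ 0 := by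
    intro s h0
    have := hγ s; rw [h0] at this; simp at this
  have huniq : ∀ {s t : Fin g} {p : Fin m × Fin m}, p ∈ I s → p ∈ I t → s = t := by
    intro s t p hs ht
    by_contra hst
    have h := hdisj s t hst
    exact absurd (Set.mem_inter hs ht) (by rw [h]; exact Set.notMem_empty p)
  have W_fwd : ∀ (s : Fin g) (j k : Fin m), (j, k) ∈ I s → W j k = γ s := by
    intro s j k h
    have hmem : (j, k) ∈ ⋃ s, I s := Set.mem_iUnion.mpr ⟨s, h⟩
    simp only [hWdef, Wfun]
    rw [dif_pos hmem]
    exact congrArg γ (huniq (Set.mem_iUnion.mp hmem).choose_spec h)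
  have W_bwd : ∀ (s : Fin g) (j k : Fin m), (j, k) ∈ I s → W k j = (γ s)⁻¹ := by
    intro s j k h
    have hmem : (j, k) ∈ ⋃ s, I s := Set.mem_iUnion.mpr ⟨s, h⟩
    have hnot : (k, j) ∉ ⋃ s, I s := hno2 hmem
    simp only [hWdef, Wfun]
    rw [dif_neg hnot, dif_pos hmem]
    rw [congrArg γ (huniq (Set.mem_iUnion.mp hmem).choose_spec h)]
  have habs : ∀ j k, ‖W j k‖ = 1 := by
    intro j k
    simp only [hWdef, Wfun]
    split_ifs with h1 h2
    · exact hγ _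
    · rw [norm_inv, hγ _]; norm_num
    · simp
  have hEsymm : ∀ p ∈ Esym (⋃ s, I s), (p.2, p.1) ∈ Esym (⋃ s, I s) := by
    intro p hp
    rcases hp with h | h
    · right; simpa using h
    · left; exact h
  have hinv' : ∀ j k, (j, k) ∈ Esym (⋃ s, I s) → W k j = (W j k)⁻¹ := by
    intro j k h
    rcases h with h | h
    · obtain ⟨s, hs⟩ := Set.mem_iUnion.mp h
      rw [W_fwd s j k hs, W_bwd s j k hs]
    · obtain ⟨s, hs⟩ := Set.mem_iUnion.mp h
      rw [W_fwd s k j hs, W_bwd s k j hs, inv_inv]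
  have hcyc : ∀ (n : ℕ) (v : ℕ → Fin m), IsCycle (Esym (⋃ s, I s)) n v →
      ∏ t ∈ Finset.range (n + 1), W (v t) (v (t + 1)) = 1 := by
    intro n v hv
    have hneu' := hneu n v hv
    have hterm : ∀ t ≤ n, W (v t) (v (t + 1)) =
        ∏ s, (γ s ^ (if (v t, v (t + 1)) ∈ I s then 1 else 0) *
              (γ s)⁻¹ ^ (if (v (t + 1), v t) ∈ I s then 1 else 0)) := by
      intro t ht
      rcases hv.2 t ht with h | h
      · obtain ⟨s₀, hs₀⟩ := Set.mem_iUnion.mp h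
        have h2 : ∀ s, (v (t + 1), v t) ∉ I s := by
          intro s hs
          exact hno2 h (Set.mem_iUnion.mpr ⟨s, hs⟩)
        have hval : ∀ s : Fin g, γ s ^ (if (v t, v (t + 1)) ∈ I s then 1 else 0) *
              (γ s)⁻¹ ^ (if (v (t + 1), v t) ∈ I s then 1 else 0)
            = if s = s₀ then γ s else 1 := by
          intro s
          rw [if_neg (h2 s), pow_zero, mul_one]
          by_cases hss : s = s₀
          · rw [if_pos (hss ▸ hs₀), if_pos hss, pow_one]
          · rw [if_neg (fun hmem => hss (huniq hmem hs₀)), if_neg hss, pow_zero]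
        rw [Finset.prod_congr rfl (fun s _ => hval s), Finset.prod_ite_eq' Finset.univ s₀ γ,
          if_pos (Finset.mem_univ s₀), W_fwd s₀ _ _ hs₀]
      · have h' : (v (t + 1), v t) ∈ ⋃ s, I s := h
        obtain ⟨s₀, hs₀⟩ := Set.mem_iUnion.mp h'
        have h2 : ∀ s, (v t, v (t + 1)) ∉ I s := by
          intro s hs
          exact hno2 h' (Set.mem_iUnion.mpr ⟨s, hs⟩)
        have hval : ∀ s : Fin g, γ s ^ (if (v t, v (t + 1)) ∈ I s then 1 else 0) *
              (γ s)⁻¹ ^ (if (v (t + 1), v t) ∈ I s then 1 else 0)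
            = if s = s₀ then (γ s)⁻¹ else 1 := by
          intro s
          rw [if_neg (h2 s), pow_zero, one_mul]
          by_cases hss : s = s₀
          · rw [if_pos (hss ▸ hs₀), if_pos hss, pow_one]
          · rw [if_neg (fun hmem => hss (huniq hmem hs₀)), if_neg hss, pow_zero]
        rw [Finset.prod_congr rfl (fun s _ => hval s),
          Finset.prod_ite_eq' Finset.univ s₀ (fun s => (γ s)⁻¹),
          if_pos (Finset.mem_univ s₀), W_bwd s₀ _ _ hs₀]
    have hsum_eq : ∀ s : Fin g,
        (∑ t ∈ Finset.range (n + 1), if (v t, v (t + 1)) ∈ I s then 1 else 0)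
        = ∑ t ∈ Finset.range (n + 1), if (v (t + 1), v t) ∈ I s then 1 else 0 := by
      intro s
      have e1 : {t : ℕ | t ≤ n ∧ (v t, v (t + 1)) ∈ I s}
          = ↑((Finset.range (n + 1)).filter (fun t => (v t, v (t + 1)) ∈ I s)) := by
        ext t; simp [Nat.lt_succ_iff, and_comm]
      have e2 : {t : ℕ | t ≤ n ∧ (v (t + 1), v t) ∈ I s}
          = ↑((Finset.range (n + 1)).filter (fun t => (v (t + 1), v t) ∈ I s)) := by
        ext t; simp [Nat.lt_succ_iff, and_comm]
      have h := hneu' s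
      rw [e1, e2, Set.ncard_coe_finset, Set.ncard_coe_finset] at h
      simpa [Finset.sum_boole] using h
    calc ∏ t ∈ Finset.range (n + 1), W (v t) (v (t + 1))
        = ∏ t ∈ Finset.range (n + 1), ∏ s,
            (γ s ^ (if (v t, v (t + 1)) ∈ I s then 1 else 0) *
             (γ s)⁻¹ ^ (if (v (t + 1), v t) ∈ I s then 1 else 0)) :=
          Finset.prod_congr rfl fun t ht => hterm t (Nat.lt_succ_iff.mp (Finset.mem_range.mp ht))
      _ = ∏ s, ∏ t ∈ Finset.range (n + 1),
            (γ s ^ (if (v t, v (t + 1)) ∈ I s then 1 else 0) *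
             (γ s)⁻¹ ^ (if (v (t + 1), v t) ∈ I s then 1 else 0)) := Finset.prod_comm
      _ = ∏ s : Fin g,
            (γ s ^ (∑ t ∈ Finset.range (n + 1), if (v t, v (t + 1)) ∈ I s then 1 else 0) *
             (γ s)⁻¹ ^ (∑ t ∈ Finset.range (n + 1), if (v (t + 1), v t) ∈ I s then 1 else 0)) := by
          refine Finset.prod_congr rfl fun s _ => ?_
          rw [Finset.prod_mul_distrib, Finset.prod_pow_eq_pow_sum, Finset.prod_pow_eq_pow_sum]
      _ = 1 := by
          refine Finset.prod_eq_one fun s _ => ?_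
          rw [← hsum_eq s, ← mul_pow, mul_inv_cancel₀ (hγne s), one_pow]
  obtain ⟨μ, hμ1, hμ2⟩ := exists_potential hEsymm habs hinv' hcyc
  refine ⟨μ, hμ1, ?_⟩
  intro s j k h
  have hmem : (j, k) ∈ Esym (⋃ s, I s) := Or.inl (Set.mem_iUnion.mpr ⟨s, h⟩)
  rw [hμ2 j k hmem, W_fwd s j k h]

end WalkMachinery

/-- **Theorem (sufficiency).** Suppose `A ∈ M_d(ℂ)^g` and there are pairwise orthogonal
nonzero orthogonal projections `P₁, …, Pₘ` summing to `I_d` such that, with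
`I⁺ₛ = {(j,k) : Pⱼ Aₛ Pₖ ≠ 0}` and `E⁺ = ∪ₛ I⁺ₛ`, the graph `({1,…,m}, E⁺)` is a dag,
the `I⁺ₛ` are pairwise disjoint and `{I⁺₁, …, I⁺_g}` is a Reinhardt partition of `E⁺`.
Then the free spectrahedron `𝔇_A` is Reinhardt. -/
theorem reinhardt_of_graph {d g : ℕ} (hd : 0 < d)
    (A : Fin g → Matrix (Fin d) (Fin d) ℂ)
    (m : ℕ) (hm : 0 < m) (P : Fin m → Matrix (Fin d) (Fin d) ℂ)
    (hsa : ∀ j, (P j)ᴴ = P j) (hidem : ∀ j, P j * P j = P j)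
    (hne : ∀ j, P j ≠ 0) (horth : ∀ j k, j ≠ k → P j * P k = 0)
    (hsum : (∑ j, P j) = 1)
    (hdag : IsDag (⋃ s, Ipedges A P s))
    (hdisj : ∀ s t, s ≠ t → Ipedges A P s ∩ Ipedges A P t = ∅)
    (hRei : IsReinhardtPartition (⋃ s, Ipedges A P s) (fun s => Ipedges A P s)) :
    DAIsReinhardt A := by
  classical
  intro N X hX γ hγ
  have hno2 : ∀ {j k : Fin m}, (j, k) ∈ ⋃ s, Ipedges A P s →
      (k, j) ∉ ⋃ s, Ipedges A P s := by
    intro j k h1 h2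
    refine hdag.2 1 (fun t => if t % 2 = 0 then j else k) ⟨by norm_num, ?_⟩
    intro t ht
    interval_cases t
    · simpa using h1
    · simpa using h2
  obtain ⟨μ, hμabs, hμ⟩ := exists_mu (fun s => Ipedges A P s) γ hγ hdisj hno2 hRei.2
  set U : Matrix (Fin d) (Fin d) ℂ := ∑ j, μ j • P j with hU
  have hμconj : ∀ j, μ j * (starRingEnd ℂ) (μ j) = 1 := by
    intro j
    rw [Complex.mul_conj]
    rw [Complex.normSq_eq_norm_sq, hμabs]
    norm_num
  have hUH : Uᴴ = ∑ j, (starRingEnd ℂ) (μ j) • P j := by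
    rw [hU, Matrix.conjTranspose_sum]
    refine Finset.sum_congr rfl fun j _ => ?_
    rw [Matrix.conjTranspose_smul, hsa]
    rfl
  have hUUH : U * Uᴴ = 1 := by
    rw [hU, hUH, Finset.sum_mul, ← hsum]
    refine Finset.sum_congr rfl fun j _ => ?_
    rw [Finset.mul_sum, Finset.sum_eq_single j]
    · rw [smul_mul_assoc, mul_smul_comm, smul_smul, hidem j, hμconj j, one_smul]
    · intro k _ hk
      rw [smul_mul_assoc, mul_smul_comm, smul_smul, horth j k (Ne.symm hk), smul_zero]
    · intro h; exact absurd (Finset.mem_univ j) h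
  have hUA : ∀ s, U * A s * Uᴴ = γ s • A s := by
    intro s
    have hA : A s = ∑ j, ∑ k, P j * A s * P k := by
      calc A s = (∑ j, P j) * A s * (∑ k, P k) := by rw [hsum, one_mul, mul_one]
        _ = ∑ j, ∑ k, P j * A s * P k := by
            rw [Finset.sum_mul, Finset.sum_mul]
            exact Finset.sum_congr rfl fun j _ => by rw [Finset.mul_sum]
    have key : ∀ j k, (μ j * (starRingEnd ℂ) (μ k)) • (P j * A s * P k)
        = γ s • (P j * A s * P k) := by
      intro j k
      by_cases h0 : P j * A s * P k = 0
      · rw [h0, smul_zero, smul_zero]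
      · have hmem : (j, k) ∈ Ipedges A P s := h0
        rw [hμ s j k hmem, mul_assoc, hμconj k, mul_one]
    calc U * A s * Uᴴ
        = ∑ j, ∑ k, (μ j * (starRingEnd ℂ) (μ k)) • (P j * A s * P k) := by
          rw [hU, hUH]
          simp only [Finset.sum_mul, Finset.mul_sum, smul_mul_assoc, mul_smul_comm, smul_smul,
            Finset.smul_sum]
          rw [Finset.sum_comm]
          exact Finset.sum_congr rfl fun j _ => Finset.sum_congr rfl fun k _ => by
            rw [mul_comm]
      _ = ∑ j, ∑ k, γ s • (P j * A s * P k) :=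
          Finset.sum_congr rfl fun j _ => Finset.sum_congr rfl fun k _ => key j k
      _ = γ s • A s := by
          conv_rhs => rw [hA]
          rw [Finset.smul_sum]
          exact Finset.sum_congr rfl fun j _ => (Finset.smul_sum).symm
  have hkronH : ∀ (B : Matrix (Fin d) (Fin d) ℂ),
      (B ⊗ₖ (1 : Matrix (Fin N) (Fin N) ℂ))ᴴ = Bᴴ ⊗ₖ 1 := by
    intro B
    ext ⟨i1, i2⟩ ⟨j1, j2⟩
    by_cases h : i2 = j2 <;>
      simp [Matrix.conjTranspose_apply, Matrix.kroneckerMap_apply, Matrix.one_apply, h, eq_comm]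
  have hQQH : (U ⊗ₖ (1 : Matrix (Fin N) (Fin N) ℂ)) * (U ⊗ₖ 1)ᴴ = 1 := by
    rw [hkronH U, ← Matrix.mul_kronecker_mul, hUUH, one_mul, Matrix.one_kronecker_one]
  have hLam : (U ⊗ₖ (1 : Matrix (Fin N) (Fin N) ℂ)) * LamA A X * (U ⊗ₖ 1)ᴴ
      = LamA A (fun s => γ s • X s) := by
    rw [hkronH U, LamA, LamA]
    simp only [Finset.sum_mul, Finset.mul_sum]
    refine Finset.sum_congr rfl fun s _ => ?_
    rw [← Matrix.mul_kronecker_mul, ← Matrix.mul_kronecker_mul, one_mul, mul_one, hUA s,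
      Matrix.smul_kronecker, Matrix.kronecker_smul]
  have hL : Lpencil A (fun s => γ s • X s)
      = (U ⊗ₖ (1 : Matrix (Fin N) (Fin N) ℂ)) * Lpencil A X * (U ⊗ₖ 1)ᴴ := by
    have hexp : (U ⊗ₖ (1 : Matrix (Fin N) (Fin N) ℂ)) *
          (1 - LamA A X - (LamA A X)ᴴ) * (U ⊗ₖ 1)ᴴ
        = (U ⊗ₖ (1 : Matrix (Fin N) (Fin N) ℂ)) * (U ⊗ₖ 1)ᴴ
          - (U ⊗ₖ 1) * LamA A X * (U ⊗ₖ 1)ᴴ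
          - (U ⊗ₖ 1) * (LamA A X)ᴴ * (U ⊗ₖ 1)ᴴ := by
      noncomm_ring
    have h2 : (U ⊗ₖ (1 : Matrix (Fin N) (Fin N) ℂ)) * (LamA A X)ᴴ * (U ⊗ₖ 1)ᴴ
        = (LamA A (fun s => γ s • X s))ᴴ := by
      rw [← hLam]
      simp only [Matrix.conjTranspose_mul, Matrix.conjTranspose_conjTranspose, mul_assoc]
    rw [Lpencil, Lpencil, hexp, hQQH, hLam, h2]
  show (Lpencil A (fun s => γ s • X s)).PosSemidef
  rw [hL]
  exact hX.mul_mul_conjTranspose_same _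
end

section
/- For every positive integer N, a tuple X = (X₁, X₂) ∈ M_N(ℂ)² lies in 𝔓_E[N] if and only if X₁*X₁ ⊗ C₁*C₁ + X₂X₂* ⊗ C₂C₂* ≺ I_{Nm} (i.e., I_{Nm} minus this sum is positive definite). -/
open Matrix Kronecker
open scoped ComplexOrder

/-- The operator norm of a rectangular complex matrix, induced by the Euclidean norms. -/
noncomputable def opNorm {a b : ℕ} (A : Matrix (Fin a) (Fin b) ℂ) : ℝ :=
  ‖LinearMap.toContinuousLinearMap (Matrix.toEuclideanLin A)‖

/-- The block matrix `E₁` on `ℂ^d = ℂ^k ⊕ ℂ^m ⊕ ℂ^n` whose `(1,2)` block is `C₁` and whose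
other blocks vanish. -/
def E1mat (k m n : ℕ) (C1 : Matrix (Fin k) (Fin m) ℂ) :
    Matrix (Fin k ⊕ Fin m ⊕ Fin n) (Fin k ⊕ Fin m ⊕ Fin n) ℂ :=
  Matrix.of fun i j =>
    match i, j with
    | Sum.inl a, Sum.inr (Sum.inl b) => C1 a b
    | _, _ => 0

/-- The block matrix `E₂` on `ℂ^d = ℂ^k ⊕ ℂ^m ⊕ ℂ^n` whose `(2,3)` block is `C₂` and whose
other blocks vanish. -/
def E2mat (k m n : ℕ) (C2 : Matrix (Fin m) (Fin n) ℂ) :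
    Matrix (Fin k ⊕ Fin m ⊕ Fin n) (Fin k ⊕ Fin m ⊕ Fin n) ℂ :=
  Matrix.of fun i j =>
    match i, j with
    | Sum.inr (Sum.inl a), Sum.inr (Sum.inr b) => C2 a b
    | _, _ => 0

/-- The homogeneous pencil `Λ_E(X) = E₁ ⊗ X₁ + E₂ ⊗ X₂` (Kronecker product). -/
noncomputable def LamE {k m n N : ℕ} (C1 : Matrix (Fin k) (Fin m) ℂ)
    (C2 : Matrix (Fin m) (Fin n) ℂ) (X1 X2 : Matrix (Fin N) (Fin N) ℂ) :
    Matrix ((Fin k ⊕ Fin m ⊕ Fin n) × Fin N) ((Fin k ⊕ Fin m ⊕ Fin n) × Fin N) ℂ :=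
  E1mat k m n C1 ⊗ₖ X1 + E2mat k m n C2 ⊗ₖ X2

/-- `𝔓_E[N] = {X ∈ M_N(ℂ)² : L_E(X) = I − Λ_E(X) − Λ_E(X)* ≻ 0}`. -/
noncomputable def PE (k m n : ℕ) (C1 : Matrix (Fin k) (Fin m) ℂ)
    (C2 : Matrix (Fin m) (Fin n) ℂ) (N : ℕ) :
    Set (Matrix (Fin N) (Fin N) ℂ × Matrix (Fin N) (Fin N) ℂ) :=
  {X | (1 - LamE C1 C2 X.1 X.2 - (LamE C1 C2 X.1 X.2)ᴴ).PosDef}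


theorem myPosDef_submatrix {m n : Type*} [Fintype m] [Fintype n] {M : Matrix n n ℂ}
    (hM : M.PosDef) (e : m ≃ n) : (M.submatrix e e).PosDef := by
  refine PosDef.of_dotProduct_mulVec_pos ((isHermitian_submatrix_equiv e).2 hM.1) (fun x hx => ?_)
  have key : dotProduct (star x) ((M.submatrix e e) *ᵥ x)
      = dotProduct (star (x ∘ e.symm)) (M *ᵥ (x ∘ e.symm)) := by
    rw [submatrix_mulVec_equiv]
    simp only [dotProduct, Function.comp_apply, Pi.star_apply]
    exact Fintype.sum_equiv e _ _ (fun i => by simp)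
  rw [key]
  refine hM.dotProduct_mulVec_pos (fun h0 => hx ?_)
  funext i
  have := congrFun h0 (e i)
  simpa using this

theorem myPosDef_submatrix_equiv {m n : Type*} [Fintype m] [Fintype n] {M : Matrix n n ℂ}
    (e : m ≃ n) : (M.submatrix e e).PosDef ↔ M.PosDef :=
  ⟨fun h => by simpa using myPosDef_submatrix h e.symm, fun h => myPosDef_submatrix h e⟩

theorem myPosDef_fromBlocks₁₁ {m n : Type*} [Fintype m] [DecidableEq m] [Fintype n]
    [DecidableEq n] (B : Matrix m n ℂ) (D : Matrix n n ℂ) :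
    (fromBlocks 1 B Bᴴ D).PosDef ↔ (D - Bᴴ * B).PosDef := by
  have h1 : (1 : Matrix m m ℂ).IsHermitian := isHermitian_one
  haveI : Invertible (1 : Matrix m m ℂ) := invertibleOne
  have hsimp : D - Bᴴ * (1 : Matrix m m ℂ)⁻¹ * B = D - Bᴴ * B := by
    rw [inv_one, Matrix.mul_one]
  rw [posDef_iff_dotProduct_mulVec, posDef_iff_dotProduct_mulVec]
  constructor
  · rintro ⟨hherm, hpos⟩
    refine ⟨by rw [← hsimp]; exact (Matrix.IsHermitian.fromBlocks₁₁ B D h1).1 hherm, fun x hx => ?_⟩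
    have hz : (-((((1 : Matrix m m ℂ)⁻¹ * B) *ᵥ x)) ⊕ᵥ x) ≠ 0 := by
      intro h0
      exact hx (funext fun i => congrFun h0 (Sum.inr i))
    have := hpos hz
    rw [dotProduct_mulVec, Matrix.schur_complement_eq₁₁ B D _ _ h1, neg_add_cancel,
      dotProduct_zero, zero_add, hsimp] at this
    rwa [dotProduct_mulVec]
  · rintro ⟨hherm, hpos⟩
    have hherm' : (fromBlocks 1 B Bᴴ D).IsHermitian := by
      rw [Matrix.IsHermitian.fromBlocks₁₁ B D h1, hsimp]; exact hherm
    refine ⟨hherm', fun x hx => ?_⟩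
    rw [dotProduct_mulVec, ← Sum.elim_comp_inl_inr x, Matrix.schur_complement_eq₁₁ B D _ _ h1,
      hsimp]
    by_cases hy : x ∘ Sum.inr = 0
    · have hx1 : x ∘ Sum.inl ≠ 0 := by
        intro h0
        apply hx
        funext i
        cases i with
        | inl i => exact congrFun h0 i
        | inr i => exact congrFun hy i
      have hv : x ∘ Sum.inl + ((1 : Matrix m m ℂ)⁻¹ * B) *ᵥ (x ∘ Sum.inr) = x ∘ Sum.inl := by
        rw [hy, mulVec_zero, add_zero]
      rw [hv, hy]
      have := (Matrix.PosDef.one (n := m) (R := ℂ)).dotProduct_mulVec_pos hx1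
      rw [dotProduct_mulVec] at this
      refine lt_of_lt_of_le this (le_add_of_nonneg_right ?_)
      simp
    · apply add_pos_of_nonneg_of_pos
      · rw [← dotProduct_mulVec]
        simpa using (Matrix.PosSemidef.one (n := m) (R := ℂ)).dotProduct_mulVec_nonneg
          (x ∘ Sum.inl + ((1 : Matrix m m ℂ)⁻¹ * B) *ᵥ (x ∘ Sum.inr))
      · rw [← dotProduct_mulVec]
        exact hpos hy

theorem myPosDef_fromBlocks₂₂ {m n : Type*} [Fintype m] [DecidableEq m] [Fintype n]
    [DecidableEq n] (A : Matrix m m ℂ) (B : Matrix m n ℂ) :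
    (fromBlocks A B Bᴴ 1).PosDef ↔ (A - B * Bᴴ).PosDef := by
  rw [← myPosDef_submatrix_equiv (Equiv.sumComm n m), Equiv.sumComm_apply,
    fromBlocks_submatrix_sum_swap_sum_swap]
  have := myPosDef_fromBlocks₁₁ Bᴴ A
  rw [conjTranspose_conjTranspose] at this
  rw [this]

/-- Reindexing equivalence grouping `(ℂ^k ⊕ ℂ^m ⊕ ℂ^n) ⊗ ℂ^N` into three blocks. -/
def spEquiv (k m n N : ℕ) :
    ((Fin k × Fin N) ⊕ ((Fin m × Fin N) ⊕ (Fin n × Fin N))) ≃ ((Fin k ⊕ Fin m ⊕ Fin n) × Fin N) where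
  toFun := Sum.elim (fun x => (Sum.inl x.1, x.2))
    (Sum.elim (fun x => (Sum.inr (Sum.inl x.1), x.2)) (fun x => (Sum.inr (Sum.inr x.1), x.2)))
  invFun := fun x => match x with
    | (Sum.inl a, p) => Sum.inl (a, p)
    | (Sum.inr (Sum.inl a), p) => Sum.inr (Sum.inl (a, p))
    | (Sum.inr (Sum.inr a), p) => Sum.inr (Sum.inr (a, p))
  left_inv := by rintro ((⟨a,p⟩)|(⟨a,p⟩|⟨a,p⟩)) <;> rfl
  right_inv := by rintro ⟨(a|a|a), p⟩ <;> rfl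

section decomp

variable {k m n N : ℕ} (C1 : Matrix (Fin k) (Fin m) ℂ) (C2 : Matrix (Fin m) (Fin n) ℂ)
  (X1 X2 : Matrix (Fin N) (Fin N) ℂ)

/-- The top-right row block of `L_E` after reindexing. -/
noncomputable def Rblk : Matrix (Fin k × Fin N) ((Fin m × Fin N) ⊕ (Fin n × Fin N)) ℂ :=
  Matrix.of fun i j => Sum.elim (fun j' => (-(C1 ⊗ₖ X1)) i j') (fun _ => 0) j

theorem L_decomp :
    (1 - LamE C1 C2 X1 X2 - (LamE C1 C2 X1 X2)ᴴ).submatrix (spEquiv k m n N) (spEquiv k m n N)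
      = fromBlocks 1 (Rblk C1 X1) (Rblk C1 X1)ᴴ
          (fromBlocks 1 (-(C2 ⊗ₖ X2)) (-(C2 ⊗ₖ X2))ᴴ 1) := by
  ext i j
  rcases i with (⟨a,p⟩|(⟨a,p⟩|⟨a,p⟩)) <;> rcases j with (⟨b,q⟩|(⟨b,q⟩|⟨b,q⟩)) <;>
    simp [LamE, E1mat, E2mat, Rblk, spEquiv, Matrix.one_apply, Prod.ext_iff,
      Matrix.conjTranspose_apply, Matrix.kroneckerMap_apply, fromBlocks]

end decomp

/-- **Lemma.** `X = (X₁, X₂) ∈ 𝔓_E[N]` if and only if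
`X₁*X₁ ⊗ C₁*C₁ + X₂X₂* ⊗ C₂C₂* ≺ I_{Nm}`. -/
theorem mem_PE_iff {k m n : ℕ} (hk : 0 < k) (hm : 0 < m) (hn : 0 < n)
    (C1 : Matrix (Fin k) (Fin m) ℂ) (C2 : Matrix (Fin m) (Fin n) ℂ)
    (hC1 : C1 ≠ 0) (hC2 : C2 ≠ 0) (hnC1 : opNorm C1 = 1) (hnC2 : opNorm C2 = 1)
    (N : ℕ) (hN : 0 < N) (X : Matrix (Fin N) (Fin N) ℂ × Matrix (Fin N) (Fin N) ℂ) :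
    X ∈ PE k m n C1 C2 N ↔
      ((1 : Matrix (Fin N × Fin m) (Fin N × Fin m) ℂ)
        - ((X.1ᴴ * X.1) ⊗ₖ (C1ᴴ * C1) + (X.2 * X.2ᴴ) ⊗ₖ (C2 * C2ᴴ))).PosDef := by
  rw [PE, Set.mem_setOf_eq, ← myPosDef_submatrix_equiv (spEquiv k m n N),
    L_decomp, myPosDef_fromBlocks₁₁]
  have hR : (fromBlocks 1 (-(C2 ⊗ₖ X.2)) (-(C2 ⊗ₖ X.2))ᴴ 1 :
        Matrix ((Fin m × Fin N) ⊕ (Fin n × Fin N)) ((Fin m × Fin N) ⊕ (Fin n × Fin N)) ℂ)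
      - (Rblk C1 X.1)ᴴ * Rblk C1 X.1
      = fromBlocks (1 - (C1 ⊗ₖ X.1)ᴴ * (C1 ⊗ₖ X.1)) (-(C2 ⊗ₖ X.2)) (-(C2 ⊗ₖ X.2))ᴴ 1 := by
    ext i j
    rcases i with ⟨a,p⟩|⟨a,p⟩ <;> rcases j with ⟨b,q⟩|⟨b,q⟩ <;>
      simp [Rblk, Matrix.mul_apply, Matrix.conjTranspose_apply, fromBlocks,
        Finset.sum_neg_distrib]
  rw [hR, myPosDef_fromBlocks₂₂, conjTranspose_neg, Matrix.neg_mul, Matrix.mul_neg, neg_neg]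
  rw [← myPosDef_submatrix_equiv (Equiv.prodComm (Fin N) (Fin m))]
  have hAA : (C1 ⊗ₖ X.1)ᴴ * (C1 ⊗ₖ X.1) = (C1ᴴ * C1) ⊗ₖ (X.1ᴴ * X.1) := by
    have h : (C1 ⊗ₖ X.1)ᴴ = C1ᴴ ⊗ₖ X.1ᴴ := by
      ext ⟨a,p⟩ ⟨b,q⟩
      simp [Matrix.conjTranspose_apply, star_mul']
    rw [h, ← Matrix.mul_kronecker_mul]
  have hBB : (C2 ⊗ₖ X.2) * (C2 ⊗ₖ X.2)ᴴ = (C2 * C2ᴴ) ⊗ₖ (X.2 * X.2ᴴ) := by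
    have h : (C2 ⊗ₖ X.2)ᴴ = C2ᴴ ⊗ₖ X.2ᴴ := by
      ext ⟨a,p⟩ ⟨b,q⟩
      simp [Matrix.conjTranspose_apply, star_mul']
    rw [h, ← Matrix.mul_kronecker_mul]
  rw [hAA, hBB]
  have hfinal : ((1 : Matrix (Fin m × Fin N) (Fin m × Fin N) ℂ)
        - (C1ᴴ * C1) ⊗ₖ (X.1ᴴ * X.1) - (C2 * C2ᴴ) ⊗ₖ (X.2 * X.2ᴴ)).submatrix
        (Equiv.prodComm (Fin N) (Fin m)) (Equiv.prodComm (Fin N) (Fin m))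
      = (1 : Matrix (Fin N × Fin m) (Fin N × Fin m) ℂ)
        - ((X.1ᴴ * X.1) ⊗ₖ (C1ᴴ * C1) + (X.2 * X.2ᴴ) ⊗ₖ (C2 * C2ᴴ)) := by
    ext ⟨p,a⟩ ⟨q,b⟩
    simp [Matrix.one_apply, Prod.ext_iff, and_comm, mul_comm]
    ring
  rw [hfinal]
end

section
/- For every positive integer N, a tuple X = (X₁, X₂) ∈ M_N(ℂ)² lies in the boundary (topological frontier) of 𝔓_E[N] if and only if X₁*X₁ ⊗ C₁*C₁ + X₂X₂* ⊗ C₂C₂* ⪯ I_{Nm} and there is a nonzero vector γ ∈ ℂ^N ⊗ ℂ^m such that [X₁*X₁ ⊗ C₁*C₁ + X₂X₂* ⊗ C₂C₂*] γ = γ. -/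
open Matrix Kronecker
open scoped ComplexOrder

set_option linter.unusedSectionVars false

section AuxGeneral
variable {p q p' q' : Type*} [Fintype p] [Fintype q] [Fintype p'] [Fintype q']
  [DecidableEq p] [DecidableEq q] [DecidableEq p'] [DecidableEq q']

theorem quad_submatrix_equiv {M : Matrix q q ℂ} (e : p ≃ q) (x : p → ℂ) :
    star x ⬝ᵥ (M.submatrix ⇑e ⇑e) *ᵥ x = star (x ∘ ⇑e.symm) ⬝ᵥ M *ᵥ (x ∘ ⇑e.symm) := by
  rw [submatrix_mulVec_equiv]
  have h1 : star x = (star (x ∘ ⇑e.symm)) ∘ ⇑e := by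
    ext i; simp
  rw [h1, comp_equiv_dotProduct_comp_equiv]

theorem posDef_submatrix_equiv {M : Matrix q q ℂ} (e : p ≃ q) :
    (M.submatrix ⇑e ⇑e).PosDef ↔ M.PosDef := by
  constructor
  · intro h
    refine posDef_iff_dotProduct_mulVec.mpr ⟨(isHermitian_submatrix_equiv e).mp h.1, fun x hx => ?_⟩
    have hx' : x ∘ ⇑e ≠ 0 := by
      intro h0; apply hx; ext i
      simpa using congrFun h0 (e.symm i)
    have := h.dotProduct_mulVec_pos hx'
    rwa [quad_submatrix_equiv, (by ext i; simp : (x ∘ ⇑e) ∘ ⇑e.symm = x)] at this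
  · intro h
    refine posDef_iff_dotProduct_mulVec.mpr ⟨(isHermitian_submatrix_equiv e).mpr h.1, fun x hx => ?_⟩
    rw [quad_submatrix_equiv]
    refine h.dotProduct_mulVec_pos (x := x ∘ ⇑e.symm) fun h0 => hx ?_
    ext i; simpa using congrFun h0 (e i)

theorem posDef_fromBlocks_one₁₁ (B : Matrix p q ℂ) (D : Matrix q q ℂ) :
    (fromBlocks 1 B Bᴴ D).PosDef ↔ (D - Bᴴ * B).PosDef := by
  have hherm : (fromBlocks (1 : Matrix p p ℂ) B Bᴴ D).IsHermitian ↔ (D - Bᴴ * B).IsHermitian := by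
    simpa [inv_one] using IsHermitian.fromBlocks₁₁ B D (isHermitian_one (n := p) (α := ℂ))
  have hschur : ∀ (x : p → ℂ) (y : q → ℂ),
      star (Sum.elim x y) ᵥ* fromBlocks 1 B Bᴴ D ⬝ᵥ Sum.elim x y =
        star (x + B *ᵥ y) ⬝ᵥ (x + B *ᵥ y) + star y ⬝ᵥ (D - Bᴴ * B) *ᵥ y := by
    intro x y
    haveI := invertibleOne (α := Matrix p p ℂ)
    have := schur_complement_eq₁₁ (A := (1 : Matrix p p ℂ)) B D x y isHermitian_one
    simpa [inv_one, dotProduct_mulVec] using this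
  constructor
  · intro h
    refine posDef_iff_dotProduct_mulVec.mpr ⟨hherm.mp h.1, fun y hy => ?_⟩
    have hv : Sum.elim (-(B *ᵥ y)) y ≠ 0 := by
      intro h0; apply hy; ext i
      simpa using congrFun h0 (Sum.inr i)
    have := h.dotProduct_mulVec_pos hv
    rw [dotProduct_mulVec, hschur] at this
    simpa using this
  · intro h
    refine posDef_iff_dotProduct_mulVec.mpr ⟨hherm.mpr h.1, fun v hv => ?_⟩
    rw [← Sum.elim_comp_inl_inr v, dotProduct_mulVec, hschur]
    rcases eq_or_ne (v ∘ Sum.inr) 0 with hy | hy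
    · have hx : v ∘ Sum.inl ≠ 0 := by
        intro hx; apply hv; ext (i | i)
        · simpa using congrFun hx i
        · simpa using congrFun hy i
      rw [hy]
      simpa using (dotProduct_star_self_pos_iff).mpr hx
    · have h1 : 0 ≤ star (v ∘ Sum.inl + B *ᵥ v ∘ Sum.inr) ⬝ᵥ (v ∘ Sum.inl + B *ᵥ v ∘ Sum.inr) :=
        dotProduct_star_self_nonneg _
      have h2 := h.dotProduct_mulVec_pos hy
      exact add_pos_of_nonneg_of_pos h1 h2

theorem posDef_fromBlocks_one₂₂ (A : Matrix p p ℂ) (B : Matrix p q ℂ) :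
    (fromBlocks A B Bᴴ 1).PosDef ↔ (A - B * Bᴴ).PosDef := by
  rw [← posDef_submatrix_equiv (Equiv.sumComm q p), Equiv.sumComm_apply,
    fromBlocks_submatrix_sum_swap_sum_swap]
  simpa using posDef_fromBlocks_one₁₁ Bᴴ A

theorem kron_conjTranspose (A : Matrix p q ℂ) (B : Matrix p' q' ℂ) :
    (A ⊗ₖ B)ᴴ = Aᴴ ⊗ₖ Bᴴ := by
  ext ⟨i, j⟩ ⟨i', j'⟩
  simp [conjTranspose_apply, mul_comm]

theorem middle_sub (B1 : Matrix p q ℂ) (B2 : Matrix q q' ℂ) :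
    (fromBlocks 1 (-B2) (-B2)ᴴ 1) - (fromCols (-B1) 0)ᴴ * (fromCols (-B1) 0) =
      fromBlocks (1 - B1ᴴ * B1) (-B2) (-B2)ᴴ 1 := by
  rw [conjTranspose_fromCols_eq_fromRows_conjTranspose, fromRows_mul_fromCols]
  ext (i | i) (j | j) <;> simp [fromBlocks]

theorem psd_not_posDef_iff {ι : Type*} [Fintype ι] [DecidableEq ι] {M : Matrix ι ι ℂ}
    (h : ((1 : Matrix ι ι ℂ) - M).PosSemidef) :
    ¬ ((1 : Matrix ι ι ℂ) - M).PosDef ↔ ∃ γ : ι → ℂ, γ ≠ 0 ∧ M *ᵥ γ = γ := by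
  constructor
  · intro hnd
    have hne : ¬ ∀ x : ι → ℂ, x ≠ 0 → 0 < star x ⬝ᵥ ((1 : Matrix ι ι ℂ) - M) *ᵥ x :=
      fun hh => hnd (posDef_iff_dotProduct_mulVec.mpr ⟨h.1, hh⟩)
    push_neg at hne
    obtain ⟨x, hx, hle⟩ := hne
    have h0 : star x ⬝ᵥ ((1 : Matrix ι ι ℂ) - M) *ᵥ x = 0 := by
      by_contra hne'
      exact hle (lt_of_le_of_ne (h.dotProduct_mulVec_nonneg x) fun e => hne' e.symm)
    have hker := (h.dotProduct_mulVec_zero_iff x).mp h0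
    rw [Matrix.sub_mulVec, Matrix.one_mulVec, sub_eq_zero] at hker
    exact ⟨x, hx, hker.symm⟩
  · rintro ⟨γ, hγ, hMγ⟩ hPD
    have h0 : ((1 : Matrix ι ι ℂ) - M) *ᵥ γ = 0 := by
      rw [Matrix.sub_mulVec, Matrix.one_mulVec, hMγ, sub_self]
    have := hPD.dotProduct_mulVec_pos hγ
    rw [h0, dotProduct_zero] at this
    exact lt_irrefl _ this

theorem smul_one_posDef {ι : Type*} [Fintype ι] [DecidableEq ι] {c : ℝ} (hc : 0 < c) :
    (((c : ℝ) : ℂ) • (1 : Matrix ι ι ℂ)).PosDef := by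
  refine posDef_iff_dotProduct_mulVec.mpr ⟨?_, ?_⟩
  · rw [IsHermitian, conjTranspose_smul, conjTranspose_one]
    simp [Complex.star_def, Complex.conj_ofReal]
  · intro x hx
    rw [Matrix.smul_mulVec, Matrix.one_mulVec, dotProduct_smul, smul_eq_mul]
    have h1 : 0 < star x ⬝ᵥ x := dotProduct_star_self_pos_iff.mpr hx
    have h2 : (0 : ℂ) < (c : ℂ) := by
      rw [Complex.zero_lt_real]; exact hc
    exact mul_pos h2 h1

theorem smul_posSemidef {ι : Type*} [Fintype ι] {c : ℝ} (hc : 0 ≤ c)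
    {A : Matrix ι ι ℂ} (hA : A.PosSemidef) : (((c : ℝ) : ℂ) • A).PosSemidef := by
  refine posSemidef_iff_dotProduct_mulVec.mpr ⟨?_, ?_⟩
  · rw [IsHermitian, conjTranspose_smul, hA.1.eq]
    simp [Complex.star_def, Complex.conj_ofReal]
  · intro x
    rw [Matrix.smul_mulVec, dotProduct_smul, smul_eq_mul]
    refine mul_nonneg ?_ (hA.dotProduct_mulVec_nonneg x)
    rw [Complex.zero_le_real]; exact hc

theorem kron_swap_sub (P Q : Matrix p p ℂ) (R S : Matrix q q ℂ) :
    ((1 : Matrix (q × p) (q × p) ℂ) - (R ⊗ₖ P + S ⊗ₖ Q)).submatrix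
        ⇑(Equiv.prodComm p q) ⇑(Equiv.prodComm p q) =
      1 - (P ⊗ₖ R + Q ⊗ₖ S) := by
  ext ⟨b, t⟩ ⟨b', t'⟩
  simp [Matrix.one_apply, Prod.ext_iff, mul_comm, and_comm]

end AuxGeneral

section Analytic
variable {Y : Type*} [TopologicalSpace Y] {ι : Type*} [Fintype ι] [DecidableEq ι] [Nonempty ι]

variable {ι : Type*} [Fintype ι] [DecidableEq ι] [Nonempty ι]

theorem dot_self_re (x : ι → ℂ) : (star x ⬝ᵥ x) = ((∑ i, ‖x i‖ ^ 2 : ℝ) : ℂ) := by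
  rw [dotProduct, Complex.ofReal_sum]
  congr 1; ext i
  rw [Pi.star_apply]
  rw [show ((‖x i‖ ^ 2 : ℝ) : ℂ) = ((Complex.normSq (x i) : ℝ) : ℂ) by
    rw [← Complex.sq_norm]]
  rw [Complex.normSq_eq_conj_mul_self]
  rfl

theorem posDef_lower_bound {A : Matrix ι ι ℂ} (hA : A.PosDef) :
    ∃ c > 0, ∀ x : ι → ℂ, c * ∑ i, ‖x i‖ ^ 2 ≤ (star x ⬝ᵥ A *ᵥ x).re := by
  classical
  set ev := hA.1.eigenvalues with hev
  set c := Finset.univ.inf' Finset.univ_nonempty ev with hc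
  have hcpos : 0 < c := by
    rw [hc, Finset.lt_inf'_iff]
    exact fun i _ => hA.eigenvalues_pos i
  refine ⟨c, hcpos, fun x => ?_⟩
  set U : Matrix ι ι ℂ := (Matrix.IsHermitian.eigenvectorUnitary hA.1 : Matrix ι ι ℂ) with hU
  have hUU : U * star U = 1 :=
    (Matrix.mem_unitaryGroup_iff).mp (Matrix.IsHermitian.eigenvectorUnitary hA.1).2
  have hdecomp : A - (c : ℂ) • 1 =
      U * (Matrix.diagonal (fun i => (RCLike.ofReal (ev i - c) : ℂ))) * star U := by
    have hsub : Matrix.diagonal (RCLike.ofReal ∘ ev) - (c : ℂ) • (1 : Matrix ι ι ℂ) =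
        Matrix.diagonal (fun i => (RCLike.ofReal (ev i - c) : ℂ)) := by
      ext i j
      rcases eq_or_ne i j with rfl | hij
      · simp only [Matrix.diagonal_apply_eq, Matrix.sub_apply, Matrix.smul_apply,
          Matrix.one_apply_eq, Function.comp_apply, smul_eq_mul, mul_one, RCLike.ofReal_sub]
        rfl
      · simp [Matrix.diagonal_apply_ne _ hij, Matrix.one_apply_ne hij]
    calc A - (c : ℂ) • 1
        = U * Matrix.diagonal (RCLike.ofReal ∘ ev) * star U - (c : ℂ) • (U * star U) := by
          rw [hUU]
          have hs := hA.1.spectral_theorem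
          rw [Unitary.conjStarAlgAut_apply] at hs
          exact congrArg (· - (c : ℂ) • 1) hs
      _ = U * (Matrix.diagonal (RCLike.ofReal ∘ ev) - (c : ℂ) • 1) * star U := by
          rw [Matrix.mul_sub, Matrix.sub_mul]
          congr 1
          rw [Matrix.mul_smul, Matrix.mul_one, Matrix.smul_mul]
      _ = _ := by rw [hsub]
  have hpsd : (A - (c : ℂ) • 1).PosSemidef := by
    rw [hdecomp]
    have hd : (Matrix.diagonal (fun i => (RCLike.ofReal (ev i - c) : ℂ))).PosSemidef := by
      rw [Matrix.posSemidef_diagonal_iff]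
      intro i
      rw [RCLike.ofReal_nonneg]
      have : c ≤ ev i := Finset.inf'_le _ (Finset.mem_univ i)
      linarith
    simpa [Matrix.star_eq_conjTranspose] using hd.mul_mul_conjTranspose_same U
  have hsplit : star x ⬝ᵥ A *ᵥ x
      = star x ⬝ᵥ (A - (c : ℂ) • 1) *ᵥ x + (c : ℂ) * (star x ⬝ᵥ x) := by
    rw [Matrix.sub_mulVec, dotProduct_sub, Matrix.smul_mulVec, Matrix.one_mulVec,
      dotProduct_smul, smul_eq_mul]
    ring
  have h1 : 0 ≤ (star x ⬝ᵥ (A - (c : ℂ) • 1) *ᵥ x).re := hpsd.re_dotProduct_nonneg x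
  have h2 : ((c : ℂ) * (star x ⬝ᵥ x)).re = c * ∑ i, ‖x i‖ ^ 2 := by
    rw [dot_self_re, ← Complex.ofReal_mul]
    exact Complex.ofReal_re _
  rw [hsplit, Complex.add_re, h2]
  linarith



theorem quad_perturb_bound (D : Matrix ι ι ℂ) (x : ι → ℂ) :
    |(star x ⬝ᵥ D *ᵥ x).re| ≤ (∑ i, ∑ j, ‖D i j‖) * ∑ i, ‖x i‖ ^ 2 := by
  set s := ∑ i, ‖x i‖ ^ 2 with hs
  have hsnn : ∀ i, ‖x i‖ ^ 2 ≤ s :=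
    fun i => Finset.single_le_sum (f := fun i => ‖x i‖ ^ 2)
      (fun j _ => sq_nonneg _) (Finset.mem_univ i)
  have habs : ‖star x ⬝ᵥ D *ᵥ x‖ ≤ (∑ i, ∑ j, ‖D i j‖) * s := by
    rw [dotProduct]
    calc ‖∑ i, star x i * (D *ᵥ x) i‖ ≤ ∑ i, ‖star x i * (D *ᵥ x) i‖ := norm_sum_le _ _
      _ ≤ ∑ i, ∑ j, ‖D i j‖ * s := by
          refine Finset.sum_le_sum fun i _ => ?_
          rw [norm_mul, mulVec, dotProduct]
          calc ‖star x i‖ * ‖∑ j, D i j * x j‖ ≤ ‖x i‖ * ∑ j, ‖D i j * x j‖ := by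
                rw [Pi.star_apply, norm_star]
                exact mul_le_mul_of_nonneg_left (norm_sum_le _ _) (norm_nonneg _)
            _ = ∑ j, ‖D i j‖ * (‖x i‖ * ‖x j‖) := by
                rw [Finset.mul_sum]; congr 1; ext j; rw [norm_mul]; ring
            _ ≤ ∑ j, ‖D i j‖ * s := by
                refine Finset.sum_le_sum fun j _ => ?_
                refine mul_le_mul_of_nonneg_left ?_ (norm_nonneg _)
                nlinarith [hsnn i, hsnn j, norm_nonneg (x i), norm_nonneg (x j)]
      _ = (∑ i, ∑ j, ‖D i j‖) * s := by
          rw [Finset.sum_mul]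
          exact Finset.sum_congr rfl fun i _ => (Finset.sum_mul _ _ _).symm
  calc |(star x ⬝ᵥ D *ᵥ x).re| ≤ ‖star x ⬝ᵥ D *ᵥ x‖ := by
        exact Complex.abs_re_le_norm _
    _ ≤ _ := habs

theorem herm_quad_star {M : Matrix ι ι ℂ} (hM : M.IsHermitian) (x : ι → ℂ) :
    star (star x ⬝ᵥ M *ᵥ x) = star x ⬝ᵥ M *ᵥ x := by
  conv_lhs => rw [star_dotProduct, star_star, star_mulVec, ← dotProduct_mulVec, hM.eq]

theorem isOpen_posDef_comp {f : Y → Matrix ι ι ℂ} (hf : Continuous f)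
    (hherm : ∀ y, (f y).IsHermitian) : IsOpen {y | (f y).PosDef} := by
  rw [isOpen_iff_mem_nhds]
  intro y₀ hy₀
  obtain ⟨c, hc, hbound⟩ := posDef_lower_bound hy₀
  have hcont : Continuous fun y => ∑ i, ∑ j, ‖f y i j - f y₀ i j‖ := by
    refine continuous_finset_sum _ fun i _ => continuous_finset_sum _ fun j _ => ?_
    exact ((hf.matrix_elem i j).sub continuous_const).norm
  have hU : IsOpen {y | ∑ i, ∑ j, ‖f y i j - f y₀ i j‖ < c} :=
    isOpen_lt hcont continuous_const
  refine Filter.mem_of_superset (hU.mem_nhds (by simpa using hc)) ?_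
  intro y hy
  refine posDef_iff_dotProduct_mulVec.mpr ⟨hherm y, fun x hx => ?_⟩
  have hsplit : star x ⬝ᵥ f y *ᵥ x
      = star x ⬝ᵥ f y₀ *ᵥ x + star x ⬝ᵥ (f y - f y₀) *ᵥ x := by
    rw [Matrix.sub_mulVec, dotProduct_sub]; ring
  have hs : 0 < ∑ i, ‖x i‖ ^ 2 := by
    have hne : ∃ i, x i ≠ 0 := by
      by_contra h; push_neg at h; exact hx (funext h)
    obtain ⟨i, hi⟩ := hne
    refine Finset.sum_pos' (fun j _ => sq_nonneg _) ⟨i, Finset.mem_univ i, ?_⟩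
    exact pow_pos (norm_pos_iff.mpr hi) 2
  have him : (star x ⬝ᵥ f y *ᵥ x).im = 0 := by
    have := herm_quad_star (hherm y) x
    have h2 := congrArg Complex.im this
    simp only [Complex.star_def, Complex.conj_im] at h2
    linarith
  have hre : 0 < (star x ⬝ᵥ f y *ᵥ x).re := by
    rw [hsplit, Complex.add_re]
    have h1 := hbound x
    have h2 := quad_perturb_bound (f y - f y₀) x
    have h3 : ∑ i, ∑ j, ‖(f y - f y₀) i j‖ < c := by
      simpa using hy
    have h4 : |(star x ⬝ᵥ (f y - f y₀) *ᵥ x).re| ≤ (∑ i, ∑ j, ‖(f y - f y₀) i j‖)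
        * ∑ i, ‖x i‖ ^ 2 := h2
    have h5 : (∑ i, ∑ j, ‖(f y - f y₀) i j‖) * ∑ i, ‖x i‖ ^ 2 < c * ∑ i, ‖x i‖ ^ 2 :=
      mul_lt_mul_of_pos_right h3 hs
    have := abs_le.mp h4
    linarith
  rw [Complex.lt_def]
  simpa using ⟨hre, him.symm⟩

theorem isClosed_posSemidef_comp {f : Y → Matrix ι ι ℂ} (hf : Continuous f) :
    IsClosed {y | (f y).PosSemidef} := by
  have hset : {y | (f y).PosSemidef}
      = {y | (f y)ᴴ = f y} ∩ ⋂ x : ι → ℂ, {y | 0 ≤ star x ⬝ᵥ (f y) *ᵥ x} := by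
    ext y
    simp only [Set.mem_setOf_eq, Set.mem_inter_iff, Set.mem_iInter]
    exact posSemidef_iff_dotProduct_mulVec
  rw [hset]
  refine (isClosed_eq hf.matrix_conjTranspose hf).inter (isClosed_iInter fun x => ?_)
  have hco : Continuous fun y => star x ⬝ᵥ (f y) *ᵥ x :=
    (continuous_const (y := star x)).dotProduct (hf.matrix_mulVec continuous_const)
  have hQ : IsClosed {z : ℂ | 0 ≤ z} := by
    have : {z : ℂ | 0 ≤ z} = Complex.re ⁻¹' Set.Ici 0 ∩ Complex.im ⁻¹' {0} := by
      ext z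
      simp [Complex.le_def, eq_comm]
    rw [this]
    exact (isClosed_Ici.preimage Complex.continuous_re).inter
      (isClosed_singleton.preimage Complex.continuous_im)
  exact hQ.preimage hco

end Analytic

section Main
variable {k m n N : ℕ} (C1 : Matrix (Fin k) (Fin m) ℂ) (C2 : Matrix (Fin m) (Fin n) ℂ)
  (X1 X2 : Matrix (Fin N) (Fin N) ℂ)

/-- The distributivity equivalence used to view the pencil as a 3×3 block matrix. -/
def eKMN (k m n N : ℕ) : (Fin k ⊕ Fin m ⊕ Fin n) × Fin N ≃
    (Fin k × Fin N) ⊕ ((Fin m × Fin N) ⊕ (Fin n × Fin N)) :=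
  (Equiv.sumProdDistrib (Fin k) (Fin m ⊕ Fin n) (Fin N)).trans
    ((Equiv.refl (Fin k × Fin N)).sumCongr (Equiv.sumProdDistrib (Fin m) (Fin n) (Fin N)))

theorem reindex_L :
    (1 - LamE C1 C2 X1 X2 - (LamE C1 C2 X1 X2)ᴴ).submatrix ⇑(eKMN k m n N).symm
        ⇑(eKMN k m n N).symm =
      fromBlocks 1 (fromCols (-(C1 ⊗ₖ X1)) 0) (fromCols (-(C1 ⊗ₖ X1)) 0)ᴴ
        (fromBlocks 1 (-(C2 ⊗ₖ X2)) (-(C2 ⊗ₖ X2))ᴴ 1) := by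
  ext i j
  rcases i with ⟨a, t⟩ | ⟨b, t⟩ | ⟨c, t⟩ <;> rcases j with ⟨a', t'⟩ | ⟨b', t'⟩ | ⟨c', t'⟩ <;>
    simp [eKMN, LamE, E1mat, E2mat, fromBlocks, fromCols, kroneckerMap_apply,
      Matrix.one_apply, conjTranspose_apply, Prod.ext_iff, Equiv.sumProdDistrib, Sum.elim,
      submatrix_apply]

theorem halg_kron :
    (1 : Matrix (Fin m × Fin N) (Fin m × Fin N) ℂ) - (C1 ⊗ₖ X1)ᴴ * (C1 ⊗ₖ X1)
        - (-(C2 ⊗ₖ X2)) * (-(C2 ⊗ₖ X2))ᴴ =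
      1 - ((C1ᴴ * C1) ⊗ₖ (X1ᴴ * X1) + (C2 * C2ᴴ) ⊗ₖ (X2 * X2ᴴ)) := by
  rw [conjTranspose_neg, Matrix.neg_mul, Matrix.mul_neg, neg_neg, kron_conjTranspose, kron_conjTranspose,
    mul_kronecker_mul, mul_kronecker_mul, sub_sub]

theorem L_posDef_iff :
    (1 - LamE C1 C2 X1 X2 - (LamE C1 C2 X1 X2)ᴴ).PosDef ↔
      ((1 : Matrix (Fin N × Fin m) (Fin N × Fin m) ℂ)
        - ((X1ᴴ * X1) ⊗ₖ (C1ᴴ * C1) + (X2 * X2ᴴ) ⊗ₖ (C2 * C2ᴴ))).PosDef := by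
  rw [← posDef_submatrix_equiv (eKMN k m n N).symm, reindex_L C1 C2 X1 X2,
    posDef_fromBlocks_one₁₁, middle_sub, posDef_fromBlocks_one₂₂, halg_kron,
    ← posDef_submatrix_equiv (Equiv.prodComm (Fin m) (Fin N))
      (M := (1 : Matrix (Fin N × Fin m) (Fin N × Fin m) ℂ)
        - ((X1ᴴ * X1) ⊗ₖ (C1ᴴ * C1) + (X2 * X2ᴴ) ⊗ₖ (C2 * C2ᴴ))),
    kron_swap_sub]

theorem L_posSemidef_iff :
    (1 - LamE C1 C2 X1 X2 - (LamE C1 C2 X1 X2)ᴴ).PosSemidef ↔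
      ((1 : Matrix (Fin N × Fin m) (Fin N × Fin m) ℂ)
        - ((X1ᴴ * X1) ⊗ₖ (C1ᴴ * C1) + (X2 * X2ᴴ) ⊗ₖ (C2 * C2ᴴ))).PosSemidef := by
  haveI := invertibleOne (α := Matrix (Fin k × Fin N) (Fin k × Fin N) ℂ)
  haveI := invertibleOne (α := Matrix (Fin m × Fin N) (Fin m × Fin N) ℂ)
  haveI := invertibleOne (α := Matrix (Fin n × Fin N) (Fin n × Fin N) ℂ)
  rw [← posSemidef_submatrix_equiv (eKMN k m n N).symm, reindex_L C1 C2 X1 X2,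
    Matrix.PosDef.fromBlocks₁₁ _ _ Matrix.PosDef.one, inv_one, Matrix.mul_one, middle_sub,
    Matrix.PosDef.fromBlocks₂₂ _ _ Matrix.PosDef.one, inv_one, Matrix.mul_one, halg_kron,
    ← posSemidef_submatrix_equiv (Equiv.prodComm (Fin m) (Fin N))
      (M := (1 : Matrix (Fin N × Fin m) (Fin N × Fin m) ℂ)
        - ((X1ᴴ * X1) ⊗ₖ (C1ᴴ * C1) + (X2 * X2ᴴ) ⊗ₖ (C2 * C2ᴴ))),
    kron_swap_sub]

end Main

/-- **Lemma.** `X = (X₁, X₂)` is in the boundary of `𝔓_E[N]` if and only if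
`X₁*X₁ ⊗ C₁*C₁ + X₂X₂* ⊗ C₂C₂* ⪯ I_{Nm}` and there is a nonzero vector
`γ ∈ ℂ^N ⊗ ℂ^m` with `[X₁*X₁ ⊗ C₁*C₁ + X₂X₂* ⊗ C₂C₂*] γ = γ`. -/
theorem mem_frontier_PE_iff {k m n : ℕ} (hk : 0 < k) (hm : 0 < m) (hn : 0 < n)
    (C1 : Matrix (Fin k) (Fin m) ℂ) (C2 : Matrix (Fin m) (Fin n) ℂ)
    (hC1 : C1 ≠ 0) (hC2 : C2 ≠ 0) (hnC1 : opNorm C1 = 1) (hnC2 : opNorm C2 = 1)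
    (N : ℕ) (hN : 0 < N) (X : Matrix (Fin N) (Fin N) ℂ × Matrix (Fin N) (Fin N) ℂ) :
    X ∈ frontier (PE k m n C1 C2 N) ↔
      (((1 : Matrix (Fin N × Fin m) (Fin N × Fin m) ℂ)
          - ((X.1ᴴ * X.1) ⊗ₖ (C1ᴴ * C1) + (X.2 * X.2ᴴ) ⊗ₖ (C2 * C2ᴴ))).PosSemidef ∧
        ∃ γ : Fin N × Fin m → ℂ, γ ≠ 0 ∧
          ((X.1ᴴ * X.1) ⊗ₖ (C1ᴴ * C1) + (X.2 * X.2ᴴ) ⊗ₖ (C2 * C2ᴴ)) *ᵥ γ = γ) := by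
  classical
  haveI : Nonempty (Fin N × Fin m) := ⟨(⟨0, hN⟩, ⟨0, hm⟩)⟩
  set S : (Matrix (Fin N) (Fin N) ℂ × Matrix (Fin N) (Fin N) ℂ) →
      Matrix (Fin N × Fin m) (Fin N × Fin m) ℂ :=
    fun Y => 1 - ((Y.1ᴴ * Y.1) ⊗ₖ (C1ᴴ * C1) + (Y.2 * Y.2ᴴ) ⊗ₖ (C2 * C2ᴴ)) with hSdef
  have hmem : ∀ Y, Y ∈ PE k m n C1 C2 N ↔ (S Y).PosDef := fun Y =>
    L_posDef_iff C1 C2 Y.1 Y.2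
  have hScont : Continuous S := by
    rw [hSdef]
    refine Continuous.sub continuous_const (Continuous.add ?_ ?_)
    · refine continuous_matrix fun i j => ?_
      exact ((((continuous_fst.matrix_conjTranspose).matrix_mul
        continuous_fst).matrix_elem i.1 j.1).mul continuous_const)
    · refine continuous_matrix fun i j => ?_
      exact (((continuous_snd.matrix_mul
        continuous_snd.matrix_conjTranspose).matrix_elem i.1 j.1).mul continuous_const)
  have hSherm : ∀ Y, (S Y).IsHermitian := by
    intro Y
    have h1 : ((Y.1ᴴ * Y.1) ⊗ₖ (C1ᴴ * C1)).IsHermitian := by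
      rw [IsHermitian, kron_conjTranspose, (isHermitian_conjTranspose_mul_self Y.1).eq,
        (isHermitian_conjTranspose_mul_self C1).eq]
    have h2 : ((Y.2 * Y.2ᴴ) ⊗ₖ (C2 * C2ᴴ)).IsHermitian := by
      rw [IsHermitian, kron_conjTranspose, (isHermitian_mul_conjTranspose_self Y.2).eq,
        (isHermitian_mul_conjTranspose_self C2).eq]
    exact isHermitian_one.sub (h1.add h2)
  have hopen : IsOpen (PE k m n C1 C2 N) := by
    have hset : PE k m n C1 C2 N = {Y | (S Y).PosDef} := Set.ext hmem
    rw [hset]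
    exact isOpen_posDef_comp hScont hSherm
  have hclosed : IsClosed {Y | (S Y).PosSemidef} := isClosed_posSemidef_comp hScont
  have hscale : ∀ (Y : Matrix (Fin N) (Fin N) ℂ × Matrix (Fin N) (Fin N) ℂ),
      (S Y).PosSemidef → ∀ (c : ℝ), 0 ≤ c → c < 1 →
      (S ((c : ℂ) • Y.1, (c : ℂ) • Y.2)).PosDef := by
    intro Y hY c hc0 hc1
    have e1 : ((c : ℂ) • Y.1)ᴴ * ((c : ℂ) • Y.1) = ((c * c : ℝ) : ℂ) • (Y.1ᴴ * Y.1) := by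
      rw [conjTranspose_smul, Complex.star_def, Complex.conj_ofReal, smul_mul_assoc,
        mul_smul_comm, smul_smul]
      push_cast; ring_nf
    have e2 : ((c : ℂ) • Y.2) * ((c : ℂ) • Y.2)ᴴ = ((c * c : ℝ) : ℂ) • (Y.2 * Y.2ᴴ) := by
      rw [conjTranspose_smul, Complex.star_def, Complex.conj_ofReal, smul_mul_assoc,
        mul_smul_comm, smul_smul]
      push_cast; ring_nf
    have hM : S ((c : ℂ) • Y.1, (c : ℂ) • Y.2)
        = ((1 - c * c : ℝ) : ℂ) • (1 : Matrix (Fin N × Fin m) (Fin N × Fin m) ℂ)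
          + ((c * c : ℝ) : ℂ) • S Y := by
      rw [hSdef]
      simp only
      rw [e1, e2, smul_kronecker, smul_kronecker, ← smul_add, smul_sub]
      have hcoe : ((1 - c * c : ℝ) : ℂ) = 1 - ((c * c : ℝ) : ℂ) := by push_cast; ring
      rw [hcoe, sub_smul, one_smul]
      abel
    rw [hM]
    refine Matrix.PosDef.add_posSemidef (smul_one_posDef (by nlinarith)) ?_
    exact smul_posSemidef (by positivity) hY
  have hclosure : closure (PE k m n C1 C2 N) = {Y | (S Y).PosSemidef} := by
    refine subset_antisymm
      (closure_minimal (fun Y hY => ((hmem Y).mp hY).posSemidef) hclosed) ?_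
    intro Y hY
    set t : ℕ → ℝ := fun j => 1 - 1 / (j + 1) with htdef
    have ht0 : ∀ j : ℕ, 0 ≤ t j := by
      intro j
      have h1 : (1 : ℝ) / (j + 1) ≤ 1 := by
        rw [div_le_one (by positivity)]
        have := Nat.cast_nonneg (α := ℝ) j
        linarith
      simp only [htdef]
      linarith
    have ht1 : ∀ j : ℕ, t j < 1 := by
      intro j
      have h1 : (0 : ℝ) < 1 / (j + 1) := by positivity
      simp only [htdef]
      linarith
    have htlim : Filter.Tendsto t Filter.atTop (nhds 1) := by
      have h0 : Filter.Tendsto (fun j : ℕ => 1 / ((j : ℝ) + 1)) Filter.atTop (nhds 0) :=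
        tendsto_one_div_add_atTop_nhds_zero_nat
      have := Filter.Tendsto.sub (tendsto_const_nhds (x := (1 : ℝ))) h0
      simpa [htdef] using this
    have hclim : Filter.Tendsto (fun j : ℕ => ((t j : ℝ) : ℂ)) Filter.atTop (nhds 1) := by
      have := (Complex.continuous_ofReal.tendsto 1).comp htlim
      simpa [Function.comp_def] using this
    have htend : Filter.Tendsto (fun j : ℕ => (((t j : ℝ) : ℂ) • Y.1, ((t j : ℝ) : ℂ) • Y.2))
        Filter.atTop (nhds Y) := by
      have h1 : Filter.Tendsto (fun j : ℕ => ((t j : ℝ) : ℂ) • Y.1) Filter.atTop (nhds Y.1) := by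
        have := hclim.smul (tendsto_const_nhds (x := Y.1))
        simpa using this
      have h2 : Filter.Tendsto (fun j : ℕ => ((t j : ℝ) : ℂ) • Y.2) Filter.atTop (nhds Y.2) := by
        have := hclim.smul (tendsto_const_nhds (x := Y.2))
        simpa using this
      exact (h1.prodMk_nhds h2).congr (fun j => rfl) |>.mono_right (le_of_eq (by simp))
    refine mem_closure_of_tendsto htend (Filter.Eventually.of_forall fun j => ?_)
    exact (hmem _).mpr (hscale Y hY (t j) (ht0 j) (ht1 j))
  have hfr : frontier (PE k m n C1 C2 N) = {Y | (S Y).PosSemidef} \ PE k m n C1 C2 N := by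
    rw [frontier, hopen.interior_eq, hclosure]
  rw [hfr, Set.mem_diff]
  constructor
  · rintro ⟨h1, h2⟩
    refine ⟨h1, ?_⟩
    have hnd : ¬ (S X).PosDef := fun hPD => h2 ((hmem X).mpr hPD)
    exact (psd_not_posDef_iff h1).mp hnd
  · rintro ⟨h1, γex⟩
    exact ⟨h1, fun hX => ((psd_not_posDef_iff h1).mpr γex) ((hmem X).mp hX)⟩
end

section
/- For every positive integer N and every tuple X = (X₁, X₂) ∈ 𝔓_E[N], one has ‖X₁‖ < 1 and ‖X₂‖ < 1 (operator norms); that is, 𝔓_E is contained in the free bidisk. -/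
open Matrix Kronecker
open scoped ComplexOrder

/-! ### Auxiliary lemmas -/

theorem dot_kron {I : Type*} [Fintype I] {N : ℕ} (A : Matrix I I ℂ) (B : Matrix (Fin N) (Fin N) ℂ)
    (p p' : I → ℂ) (q q' : Fin N → ℂ) :
    star (fun is : I × Fin N => p is.1 * q is.2) ⬝ᵥ
      ((A ⊗ₖ B) *ᵥ fun is => p' is.1 * q' is.2)
      = (star p ⬝ᵥ (A *ᵥ p')) * (star q ⬝ᵥ (B *ᵥ q')) := by
  calc star (fun is : I × Fin N => p is.1 * q is.2) ⬝ᵥ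
      ((A ⊗ₖ B) *ᵥ fun is => p' is.1 * q' is.2)
      = ∑ i : I, ∑ s : Fin N, (star (p i) * (A *ᵥ p') i) * (star (q s) * (B *ᵥ q') s) := by
        simp only [dotProduct, mulVec, Fintype.sum_prod_type, Pi.star_apply, star_mul',
          kroneckerMap_apply, Finset.mul_sum, Finset.sum_mul]
        apply Finset.sum_congr rfl; intro i _
        apply Finset.sum_congr rfl; intro s _
        rw [Finset.sum_comm]
        apply Finset.sum_congr rfl; intro j _
        apply Finset.sum_congr rfl; intro t _
        ring
    _ = (star p ⬝ᵥ (A *ᵥ p')) * (star q ⬝ᵥ (B *ᵥ q')) := by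
        rw [dotProduct, dotProduct, Finset.sum_mul_sum]
        simp [Pi.star_apply]

theorem dot_tensor {I : Type*} [Fintype I] {N : ℕ}
    (p p' : I → ℂ) (q q' : Fin N → ℂ) :
    star (fun is : I × Fin N => p is.1 * q is.2) ⬝ᵥ (fun is => p' is.1 * q' is.2)
      = (star p ⬝ᵥ p') * (star q ⬝ᵥ q') := by
  simp only [dotProduct, Fintype.sum_prod_type, Pi.star_apply, star_mul']
  rw [Finset.sum_mul_sum]
  apply Finset.sum_congr rfl; intro i _
  apply Finset.sum_congr rfl; intro s _
  ring

theorem dot_conjT {α : Type*} [Fintype α] (M : Matrix α α ℂ) (x y : α → ℂ) :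
    star x ⬝ᵥ (Mᴴ *ᵥ y) = star (star y ⬝ᵥ (M *ᵥ x)) := by
  simp only [dotProduct, mulVec, conjTranspose_apply, Pi.star_apply, Finset.mul_sum, star_sum,
    star_mul', star_star]
  rw [Finset.sum_comm]
  apply Finset.sum_congr rfl; intro i _
  apply Finset.sum_congr rfl; intro j _
  ring

theorem norm_sq_dot {a : ℕ} (w : Fin a → ℂ) :
    star w ⬝ᵥ w = ((‖(WithLp.equiv 2 (Fin a → ℂ)).symm w‖ : ℝ) : ℂ) ^ 2 := by
  rw [dotProduct_comm, ← EuclideanSpace.inner_toLp_toLp, inner_self_eq_norm_sq_to_K]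
  norm_cast

theorem exists_opNorm_attained {a b : ℕ} (hb : 0 < b) (A : Matrix (Fin a) (Fin b) ℂ) :
    ∃ u : EuclideanSpace ℂ (Fin b), ‖u‖ = 1 ∧
      ‖Matrix.toEuclideanLin A u‖ =
        ‖LinearMap.toContinuousLinearMap (Matrix.toEuclideanLin A)‖ := by
  set f := LinearMap.toContinuousLinearMap (Matrix.toEuclideanLin A) with hf
  have hsp : (Metric.sphere (0 : EuclideanSpace ℂ (Fin b)) 1).Nonempty :=
    ⟨EuclideanSpace.single ⟨0, hb⟩ (1 : ℂ), by
      simp [EuclideanSpace.norm_single]⟩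
  obtain ⟨u, hu, hmax⟩ := (isCompact_sphere (0 : EuclideanSpace ℂ (Fin b)) 1).exists_isMaxOn hsp
    (f.continuous.norm.continuousOn)
  have hu1 : ‖u‖ = 1 := by simpa using hu
  have hfu : f u = Matrix.toEuclideanLin A u := rfl
  refine ⟨u, hu1, le_antisymm (by simpa [hfu, hu1] using f.le_opNorm u) ?_⟩
  rw [← hfu]
  apply f.opNorm_le_bound (norm_nonneg _)
  intro z
  by_cases hz : z = 0
  · simp [hz]
  · have hzn : ‖z‖ ≠ 0 := by simpa using hz
    have hmem : ‖z‖⁻¹ • z ∈ Metric.sphere (0 : EuclideanSpace ℂ (Fin b)) 1 := by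
      simp [norm_smul, abs_of_nonneg, inv_mul_cancel₀ hzn]
    have := hmax hmem
    have h2 : ‖z‖⁻¹ * ‖f z‖ ≤ ‖f u‖ := by
      simpa [f.map_smul, norm_smul] using this
    calc ‖f z‖ = ‖z‖ * (‖z‖⁻¹ * ‖f z‖) := by field_simp
    _ ≤ ‖z‖ * ‖f u‖ := by
        apply mul_le_mul_of_nonneg_left h2 (norm_nonneg _)
    _ = ‖f u‖ * ‖z‖ := by ring

theorem exists_normalized_pair {a b : ℕ} (hb : 0 < b) (A : Matrix (Fin a) (Fin b) ℂ) (r : ℝ)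
    (hr : opNorm A = r) (hr0 : r ≠ 0) :
    ∃ (u : Fin b → ℂ) (x : Fin a → ℂ),
      star u ⬝ᵥ u = 1 ∧ star x ⬝ᵥ x = 1 ∧ star x ⬝ᵥ (A *ᵥ u) = (r : ℂ) := by
  obtain ⟨u₀, hu₀, hAu⟩ := exists_opNorm_attained hb A
  set u : Fin b → ℂ := WithLp.equiv 2 _ u₀ with hudef
  have hsymm : (WithLp.equiv 2 (Fin b → ℂ)).symm u = u₀ :=
    (WithLp.equiv 2 (Fin b → ℂ)).symm_apply_apply u₀
  have huu : star u ⬝ᵥ u = 1 := by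
    rw [norm_sq_dot, hsymm, hu₀]; norm_num
  set w : Fin a → ℂ := A *ᵥ u with hwdef
  have hw : (WithLp.equiv 2 (Fin a → ℂ)).symm w = Matrix.toEuclideanLin A u₀ := by
    rw [Matrix.toEuclideanLin_apply]
    rfl
  have hww : star w ⬝ᵥ w = ((r : ℝ) : ℂ) ^ 2 := by
    rw [norm_sq_dot, hw, hAu]
    rw [opNorm] at hr
    rw [hr]
  have hrC : ((r : ℝ) : ℂ) ≠ 0 := by exact_mod_cast hr0
  have hstarr : star ((r : ℝ) : ℂ) = ((r : ℝ) : ℂ) := by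
    rw [RCLike.star_def, Complex.conj_ofReal]
  refine ⟨u, ((r : ℝ) : ℂ)⁻¹ • w, huu, ?_, ?_⟩
  · rw [star_smul, smul_dotProduct, dotProduct_smul, hww, star_inv₀, hstarr]
    field_simp
    ring_nf; rw [← mul_pow, mul_inv_cancel₀ hrC, one_pow]
  · rw [star_smul, smul_dotProduct, ← hwdef, hww, star_inv₀, hstarr]
    field_simp
    ring_nf; rw [pow_two, mul_assoc, mul_inv_cancel₀ hrC, mul_one]

theorem dot_elim3 {k m n : ℕ} (a1 b1 : Fin k → ℂ) (a2 b2 : Fin m → ℂ) (a3 b3 : Fin n → ℂ) :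
    star (Sum.elim a1 (Sum.elim a2 a3)) ⬝ᵥ Sum.elim b1 (Sum.elim b2 b3)
      = star a1 ⬝ᵥ b1 + star a2 ⬝ᵥ b2 + star a3 ⬝ᵥ b3 := by
  simp [dotProduct, Fintype.sum_sum_type, add_assoc]

theorem dot_E1 {k m n : ℕ} (C1 : Matrix (Fin k) (Fin m) ℂ)
    (a1 b1 : Fin k → ℂ) (a2 b2 : Fin m → ℂ) (a3 b3 : Fin n → ℂ) :
    star (Sum.elim a1 (Sum.elim a2 a3)) ⬝ᵥ
      (E1mat k m n C1 *ᵥ Sum.elim b1 (Sum.elim b2 b3)) = star a1 ⬝ᵥ (C1 *ᵥ b2) := by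
  simp [dotProduct, mulVec, Fintype.sum_sum_type, E1mat]

theorem dot_E2 {k m n : ℕ} (C2 : Matrix (Fin m) (Fin n) ℂ)
    (a1 b1 : Fin k → ℂ) (a2 b2 : Fin m → ℂ) (a3 b3 : Fin n → ℂ) :
    star (Sum.elim a1 (Sum.elim a2 a3)) ⬝ᵥ
      (E2mat k m n C2 *ᵥ Sum.elim b1 (Sum.elim b2 b3)) = star a2 ⬝ᵥ (C2 *ᵥ b3) := by
  simp [dotProduct, mulVec, Fintype.sum_sum_type, E2mat]

theorem key_lemma {I : Type*} [Fintype I] [DecidableEq I] {N : ℕ}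
    (A1 A2 : Matrix I I ℂ) (X1 X2 : Matrix (Fin N) (Fin N) ℂ)
    (hPD : (1 - (A1 ⊗ₖ X1 + A2 ⊗ₖ X2) - (A1 ⊗ₖ X1 + A2 ⊗ₖ X2)ᴴ).PosDef)
    (p1 p2 : I → ℂ) (x y : Fin N → ℂ) (r : ℝ)
    (hp11 : star p1 ⬝ᵥ p1 = 1) (hp22 : star p2 ⬝ᵥ p2 = 1)
    (hp12 : star p1 ⬝ᵥ p2 = 0) (hp21 : star p2 ⬝ᵥ p1 = 0)
    (hxx : star x ⬝ᵥ x = 1) (hyy : star y ⬝ᵥ y = 1)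
    (hA1_11 : star p1 ⬝ᵥ (A1 *ᵥ p1) = 0) (hA1_12 : star p1 ⬝ᵥ (A1 *ᵥ p2) = 1)
    (hA1_21 : star p2 ⬝ᵥ (A1 *ᵥ p1) = 0) (hA1_22 : star p2 ⬝ᵥ (A1 *ᵥ p2) = 0)
    (hA2_11 : star p1 ⬝ᵥ (A2 *ᵥ p1) = 0) (hA2_12 : star p1 ⬝ᵥ (A2 *ᵥ p2) = 0)
    (hA2_21 : star p2 ⬝ᵥ (A2 *ᵥ p1) = 0) (hA2_22 : star p2 ⬝ᵥ (A2 *ᵥ p2) = 0)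
    (hX : star x ⬝ᵥ (X1 *ᵥ y) = (r : ℂ)) :
    r < 1 := by
  set t1 : I × Fin N → ℂ := fun is => p1 is.1 * x is.2 with ht1
  set t2 : I × Fin N → ℂ := fun is => p2 is.1 * y is.2 with ht2
  set ξ : I × Fin N → ℂ := t1 + t2 with hξdef
  set M := A1 ⊗ₖ X1 + A2 ⊗ₖ X2 with hM
  have hstar : star ξ = star t1 + star t2 := by rw [hξdef, star_add]
  have h1 : star ξ ⬝ᵥ ξ = 2 := by
    rw [hξdef, hstar, add_dotProduct, dotProduct_add, dotProduct_add, ht1, ht2]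
    rw [dot_tensor p1 p1 x x, dot_tensor p1 p2 x y, dot_tensor p2 p1 y x,
      dot_tensor p2 p2 y y, hp11, hp22, hp12, hp21, hxx, hyy]
    ring
  have h2 : star ξ ⬝ᵥ (M *ᵥ ξ) = (r : ℂ) := by
    rw [hξdef, hM, hstar, Matrix.add_mulVec, Matrix.mulVec_add, Matrix.mulVec_add]
    simp only [add_dotProduct, dotProduct_add, ht1, ht2]
    rw [dot_kron A1 X1 p1 p1 x x, dot_kron A1 X1 p1 p2 x y, dot_kron A1 X1 p2 p1 y x,
      dot_kron A1 X1 p2 p2 y y, dot_kron A2 X2 p1 p1 x x, dot_kron A2 X2 p1 p2 x y,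
      dot_kron A2 X2 p2 p1 y x, dot_kron A2 X2 p2 p2 y y,
      hA1_11, hA1_12, hA1_21, hA1_22, hA2_11, hA2_12, hA2_21, hA2_22, hX]
    ring
  have h3 : star ξ ⬝ᵥ (Mᴴ *ᵥ ξ) = (r : ℂ) := by
    rw [dot_conjT, h2]
    exact Complex.conj_ofReal r
  have hξ0 : ξ ≠ 0 := by
    intro h
    rw [h] at h1
    simp at h1
  have hpos := hPD.dotProduct_mulVec_pos hξ0
  have hQ : star ξ ⬝ᵥ ((1 - M - Mᴴ) *ᵥ ξ) = ((2 - 2 * r : ℝ) : ℂ) := by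
    rw [Matrix.sub_mulVec, Matrix.sub_mulVec, dotProduct_sub, dotProduct_sub,
      Matrix.one_mulVec, h1, h2, h3]
    push_cast
    ring
  rw [hQ] at hpos
  rw [Complex.zero_lt_real] at hpos
  linarith

/-- **Lemma.** `𝔓_E` is contained in the free bidisk: every `X ∈ 𝔓_E[N]` satisfies
`‖X₁‖ < 1` and `‖X₂‖ < 1`. -/
theorem PE_subset_bidisk {k m n : ℕ} (hk : 0 < k) (hm : 0 < m) (hn : 0 < n)
    (C1 : Matrix (Fin k) (Fin m) ℂ) (C2 : Matrix (Fin m) (Fin n) ℂ)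
    (hC1 : C1 ≠ 0) (hC2 : C2 ≠ 0) (hnC1 : opNorm C1 = 1) (hnC2 : opNorm C2 = 1)
    (N : ℕ) (hN : 0 < N) (X : Matrix (Fin N) (Fin N) ℂ × Matrix (Fin N) (Fin N) ℂ)
    (hX : X ∈ PE k m n C1 C2 N) :
    opNorm X.1 < 1 ∧ opNorm X.2 < 1 := by
  have hPD : (1 - (E1mat k m n C1 ⊗ₖ X.1 + E2mat k m n C2 ⊗ₖ X.2)
      - (E1mat k m n C1 ⊗ₖ X.1 + E2mat k m n C2 ⊗ₖ X.2)ᴴ).PosDef := hX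
  constructor
  · -- bound for X.1
    by_cases h0 : opNorm X.1 = 0
    · rw [h0]; norm_num
    obtain ⟨u, v, huu, hvv, hvCu⟩ := exists_normalized_pair hm C1 1 hnC1 one_ne_zero
    obtain ⟨y, x, hyy, hxx, hxXy⟩ := exists_normalized_pair hN X.1 (opNorm X.1) rfl h0
    refine key_lemma (E1mat k m n C1) (E2mat k m n C2) X.1 X.2 hPD
      (Sum.elim v (Sum.elim 0 0)) (Sum.elim 0 (Sum.elim u 0)) x y (opNorm X.1)
      ?_ ?_ ?_ ?_ hxx hyy ?_ ?_ ?_ ?_ ?_ ?_ ?_ ?_ hxXy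
    · rw [dot_elim3]; simp [hvv]
    · rw [dot_elim3]; simp [huu]
    · rw [dot_elim3]; simp
    · rw [dot_elim3]; simp
    · rw [dot_E1]; simp
    · rw [dot_E1]
      simpa using hvCu
    · rw [dot_E1]; simp
    · rw [dot_E1]; simp
    · rw [dot_E2]; simp
    · rw [dot_E2]; simp
    · rw [dot_E2]; simp
    · rw [dot_E2]; simp
  · -- bound for X.2
    by_cases h0 : opNorm X.2 = 0
    · rw [h0]; norm_num
    have hPD' : (1 - (E2mat k m n C2 ⊗ₖ X.2 + E1mat k m n C1 ⊗ₖ X.1)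
        - (E2mat k m n C2 ⊗ₖ X.2 + E1mat k m n C1 ⊗ₖ X.1)ᴴ).PosDef := by
      rwa [add_comm (E2mat k m n C2 ⊗ₖ X.2)]
    obtain ⟨u, v, huu, hvv, hvCu⟩ := exists_normalized_pair hn C2 1 hnC2 one_ne_zero
    obtain ⟨y, x, hyy, hxx, hxXy⟩ := exists_normalized_pair hN X.2 (opNorm X.2) rfl h0
    refine key_lemma (E2mat k m n C2) (E1mat k m n C1) X.2 X.1 hPD'
      (Sum.elim 0 (Sum.elim v 0)) (Sum.elim 0 (Sum.elim 0 u)) x y (opNorm X.2)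
      ?_ ?_ ?_ ?_ hxx hyy ?_ ?_ ?_ ?_ ?_ ?_ ?_ ?_ hxXy
    · rw [dot_elim3]; simp [hvv]
    · rw [dot_elim3]; simp [huu]
    · rw [dot_elim3]; simp
    · rw [dot_elim3]; simp
    · rw [dot_E2]; simp
    · rw [dot_E2]
      simpa using hvCu
    · rw [dot_E2]; simp
    · rw [dot_E2]; simp
    · rw [dot_E1]; simp
    · rw [dot_E1]; simp
    · rw [dot_E1]; simp
    · rw [dot_E1]; simp
end

section
/- If C₁*C₁ + C₂C₂* ⪯ I_m, then for every positive integer N the set 𝔓_E[N] equals the free bidisk at level N, i.e., 𝔓_E[N] = {(X₁, X₂) ∈ M_N(ℂ)² : ‖X₁‖ < 1 and ‖X₂‖ < 1}. -/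
open Matrix Kronecker
open scoped ComplexOrder

noncomputable def nsq {p : Type*} [Fintype p] (x : p → ℂ) : ℝ := (star x ⬝ᵥ x).re

lemma nsq_nonneg {p : Type*} [Fintype p] (x : p → ℂ) : 0 ≤ nsq x := by
  have := dotProduct_star_self_nonneg x
  rw [Complex.le_def] at this
  simpa [nsq] using this.1

lemma nsq_eq_zero_iff {p : Type*} [Fintype p] {x : p → ℂ} : nsq x = 0 ↔ x = 0 := by
  constructor
  · intro h
    have h2 := dotProduct_star_self_nonneg x
    rw [← dotProduct_star_self_eq_zero (v := x)]
    rw [Complex.le_def] at h2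
    exact Complex.ext (by simpa [nsq] using h) (by simpa using h2.2.symm)
  · intro h; simp [h, nsq]

lemma nsq_pos {p : Type*} [Fintype p] {x : p → ℂ} (hx : x ≠ 0) : 0 < nsq x :=
  lt_of_le_of_ne (nsq_nonneg x) (fun h => hx (nsq_eq_zero_iff.mp h.symm))

lemma nsq_eq_norm_sq {p : Type*} [Fintype p] (x : p → ℂ) :
    nsq x = ‖(WithLp.equiv 2 (p → ℂ)).symm x‖ ^ 2 := by
  rw [EuclideanSpace.norm_eq]
  rw [Real.sq_sqrt (by positivity)]
  simp [nsq, dotProduct, Complex.re_sum, Complex.mul_re, Complex.normSq_apply,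
    Complex.sq_norm, Complex.normSq]

lemma nsq_mulVec_le {a b : ℕ} (A : Matrix (Fin a) (Fin b) ℂ) (x : Fin b → ℂ) :
    nsq (A *ᵥ x) ≤ opNorm A ^ 2 * nsq x := by
  rw [nsq_eq_norm_sq, nsq_eq_norm_sq]
  have h1 : (WithLp.equiv 2 (Fin a → ℂ)).symm (A *ᵥ x)
      = LinearMap.toContinuousLinearMap (Matrix.toEuclideanLin A)
          ((WithLp.equiv 2 (Fin b → ℂ)).symm x) := by
    simp [Matrix.toEuclideanLin_apply_piLp_toLp]
  rw [h1]
  have := (LinearMap.toContinuousLinearMap (Matrix.toEuclideanLin A)).le_opNorm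
      ((WithLp.equiv 2 (Fin b → ℂ)).symm x)
  calc _ ≤ (opNorm A * ‖(WithLp.equiv 2 (Fin b → ℂ)).symm x‖) ^ 2 := by
        apply pow_le_pow_left₀ (norm_nonneg _) this
    _ = _ := by rw [mul_pow]

lemma opNorm_nonneg' {a b : ℕ} (A : Matrix (Fin a) (Fin b) ℂ) : 0 ≤ opNorm A :=
  norm_nonneg _

lemma exists_nsq_attain {a b : ℕ} (hb : 0 < b) (A : Matrix (Fin a) (Fin b) ℂ) :
    ∃ x : Fin b → ℂ, nsq x = 1 ∧ nsq (A *ᵥ x) = opNorm A ^ 2 := by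
  set f := LinearMap.toContinuousLinearMap (Matrix.toEuclideanLin A) with hf
  have hx0 : (EuclideanSpace.single (⟨0, hb⟩ : Fin b) (1:ℂ)) ∈
      Metric.sphere (0 : EuclideanSpace ℂ (Fin b)) 1 := by
    simp [EuclideanSpace.norm_single]
  obtain ⟨z, hz, hmax⟩ := (isCompact_sphere (0 : EuclideanSpace ℂ (Fin b)) 1).exists_isMaxOn
    ⟨_, hx0⟩ (by fun_prop : Continuous fun x : EuclideanSpace ℂ (Fin b) => ‖f x‖).continuousOn
  have hznorm : ‖z‖ = 1 := by simpa using hz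
  have hfz : ‖f z‖ = opNorm A := by
    refine le_antisymm (by have := f.le_opNorm z; rw [hznorm, mul_one] at this; exact this) ?_
    refine ContinuousLinearMap.opNorm_le_bound f (norm_nonneg _) fun x => ?_
    rcases eq_or_ne x 0 with rfl | hx
    · simp
    · have hc : ‖x‖ ≠ 0 := norm_ne_zero_iff.mpr hx
      have hmem : (‖x‖⁻¹ : ℂ) • x ∈ Metric.sphere (0 : EuclideanSpace ℂ (Fin b)) 1 := by
        simp [norm_smul, inv_mul_cancel₀ hc]
      have := hmax hmem
      have h2 : ‖f ((‖x‖⁻¹ : ℂ) • x)‖ = ‖x‖⁻¹ * ‖f x‖ := by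
        rw [_root_.map_smul, norm_smul]; simp
      have h3 : ‖x‖⁻¹ * ‖f x‖ ≤ ‖f z‖ := by rw [← h2]; exact this
      calc ‖f x‖ = ‖x‖ * (‖x‖⁻¹ * ‖f x‖) := by field_simp
        _ ≤ ‖x‖ * ‖f z‖ := by
            exact mul_le_mul_of_nonneg_left h3 (norm_nonneg _)
        _ = ‖f z‖ * ‖x‖ := mul_comm _ _
  refine ⟨WithLp.equiv 2 (Fin b → ℂ) z, ?_, ?_⟩
  · rw [nsq_eq_norm_sq]; simp [hznorm]
  · rw [nsq_eq_norm_sq]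
    have h1 : (WithLp.equiv 2 (Fin a → ℂ)).symm (A *ᵥ (WithLp.equiv 2 (Fin b → ℂ) z))
        = f z := by
      rw [hf]
      simp [Matrix.toEuclideanLin_apply]
    rw [h1, hfz]

section DotAlg
variable {p q : Type*} [Fintype p] [Fintype q]

lemma dot_conjT_mulVec (A : Matrix p q ℂ) (x : q → ℂ) (y : p → ℂ) :
    star x ⬝ᵥ (Aᴴ *ᵥ y) = star (A *ᵥ x) ⬝ᵥ y := by
  rw [Matrix.dotProduct_mulVec, ← Matrix.star_mulVec]

lemma dot_self_conjT_mul (A : Matrix p q ℂ) (x : q → ℂ) :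
    star x ⬝ᵥ ((Aᴴ * A) *ᵥ x) = star (A *ᵥ x) ⬝ᵥ (A *ᵥ x) := by
  rw [← Matrix.mulVec_mulVec, dot_conjT_mulVec]

lemma dot_self_mul_conjT (B : Matrix p q ℂ) (x : p → ℂ) :
    star x ⬝ᵥ ((B * Bᴴ) *ᵥ x) = star (Bᴴ *ᵥ x) ⬝ᵥ (Bᴴ *ᵥ x) := by
  conv_lhs => rw [show B * Bᴴ = Bᴴᴴ * Bᴴ by rw [Matrix.conjTranspose_conjTranspose]]
  exact dot_self_conjT_mul Bᴴ x

lemma dot_cross (B : Matrix p q ℂ) (v : p → ℂ) (w : q → ℂ) :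
    star v ⬝ᵥ (B *ᵥ w) = star (Bᴴ *ᵥ v) ⬝ᵥ w := by
  have := dot_conjT_mulVec Bᴴ v w
  rwa [Matrix.conjTranspose_conjTranspose] at this

lemma dot_herm_star (M : Matrix p p ℂ) (y : p → ℂ) :
    star y ⬝ᵥ (Mᴴ *ᵥ y) = star (star y ⬝ᵥ (M *ᵥ y)) := by
  rw [dot_conjT_mulVec, Matrix.star_dotProduct]

lemma nsq_sub (x y : p → ℂ) :
    nsq (x - y) = nsq x - 2 * (star x ⬝ᵥ y).re + nsq y := by
  simp only [nsq, star_sub, sub_dotProduct, dotProduct_sub, Complex.sub_re,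
    Complex.add_re]
  have h : (star y ⬝ᵥ x).re = (star x ⬝ᵥ y).re := by
    rw [Matrix.star_dotProduct]
    simp [Complex.star_def]
  rw [h]; ring

lemma quad_re [DecidableEq p] (Λ : Matrix p p ℂ) (y : p → ℂ) :
    (star y ⬝ᵥ ((1 - Λ - Λᴴ) *ᵥ y)).re = nsq y - 2 * (star y ⬝ᵥ (Λ *ᵥ y)).re := by
  rw [Matrix.sub_mulVec, Matrix.sub_mulVec, Matrix.one_mulVec, dotProduct_sub,
    dotProduct_sub, dot_herm_star]
  simp only [Complex.sub_re, nsq, Complex.star_def, Complex.conj_re]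
  ring

lemma posdef_of_herm_re {M : Matrix p p ℂ} (hH : M.IsHermitian)
    (h : ∀ y, y ≠ 0 → 0 < (star y ⬝ᵥ (M *ᵥ y)).re) : M.PosDef := by
  refine Matrix.PosDef.of_dotProduct_mulVec_pos hH fun ⦃y⦄ hy => ?_
  have him : (star y ⬝ᵥ (M *ᵥ y)).im = 0 := by
    have h1 := dot_herm_star M y
    rw [hH.eq] at h1
    have := congrArg Complex.im h1
    simp only [Complex.star_def, Complex.conj_im] at this
    linarith
  rw [Complex.lt_def]
  exact ⟨by simpa using h y hy, by simp [him]⟩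

end DotAlg

section KronPSD
variable {p q : Type*} [Fintype p] [Fintype q] [DecidableEq p] [DecidableEq q]

lemma conjT_kron (A : Matrix p p ℂ) (B : Matrix q q ℂ) :
    (A ⊗ₖ B)ᴴ = Aᴴ ⊗ₖ Bᴴ := by
  ext ⟨i, r⟩ ⟨j, s⟩
  simp [Matrix.conjTranspose_apply, mul_comm]

lemma psd_smul {r : ℝ} (hr : 0 ≤ r) {M : Matrix p p ℂ} (hM : M.PosSemidef) :
    ((r : ℂ) • M).PosSemidef := by
  refine Matrix.PosSemidef.of_dotProduct_mulVec_nonneg ?_ fun x => ?_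
  · unfold Matrix.IsHermitian
    rw [Matrix.conjTranspose_smul, hM.1.eq]
    simp
  · have hz := hM.dotProduct_mulVec_nonneg x
    rw [Complex.le_def] at hz ⊢
    rw [Matrix.smul_mulVec, dotProduct_smul]
    constructor
    · simp only [smul_eq_mul, Complex.mul_re, Complex.ofReal_re, Complex.ofReal_im]
      simp only [Complex.zero_re] at hz ⊢
      nlinarith [hz.1]
    · simp only [smul_eq_mul, Complex.mul_im, Complex.ofReal_re, Complex.ofReal_im]
      simp only [Complex.zero_im] at hz ⊢
      rw [← hz.2]; ring

lemma psd_kron {P : Matrix p p ℂ} {Q : Matrix q q ℂ}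
    (hP : P.PosSemidef) (hQ : Q.PosSemidef) : (P ⊗ₖ Q).PosSemidef := by
  exact Matrix.PosSemidef.kronecker hP hQ

end KronPSD

section Blocks
variable {k m n N : ℕ}

lemma dot_split (y z : ((Fin k ⊕ Fin m ⊕ Fin n) × Fin N) → ℂ) :
    star y ⬝ᵥ z
      = (star (fun aq : Fin k × Fin N => y (Sum.inl aq.1, aq.2)) ⬝ᵥ
          (fun aq : Fin k × Fin N => z (Sum.inl aq.1, aq.2)))
      + (star (fun bq : Fin m × Fin N => y (Sum.inr (Sum.inl bq.1), bq.2)) ⬝ᵥ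
          (fun bq : Fin m × Fin N => z (Sum.inr (Sum.inl bq.1), bq.2)))
      + (star (fun cq : Fin n × Fin N => y (Sum.inr (Sum.inr cq.1), cq.2)) ⬝ᵥ
          (fun cq : Fin n × Fin N => z (Sum.inr (Sum.inr cq.1), cq.2))) := by
  simp only [dotProduct, Pi.star_apply, Fintype.sum_prod_type, Fintype.sum_sum_type]
  ring

lemma nsq_split (y : ((Fin k ⊕ Fin m ⊕ Fin n) × Fin N) → ℂ) :
    nsq y = nsq (fun aq : Fin k × Fin N => y (Sum.inl aq.1, aq.2))
      + nsq (fun bq : Fin m × Fin N => y (Sum.inr (Sum.inl bq.1), bq.2))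
      + nsq (fun cq : Fin n × Fin N => y (Sum.inr (Sum.inr cq.1), cq.2)) := by
  simp only [nsq, dot_split y y, Complex.add_re]

end Blocks

section LamV
variable {k m n N : ℕ} (C1 : Matrix (Fin k) (Fin m) ℂ) (C2 : Matrix (Fin m) (Fin n) ℂ)
  (X1 X2 : Matrix (Fin N) (Fin N) ℂ) (y : ((Fin k ⊕ Fin m ⊕ Fin n) × Fin N) → ℂ)

lemma lamE_mulVec_inl (a : Fin k) (p : Fin N) :
    (LamE C1 C2 X1 X2 *ᵥ y) (Sum.inl a, p)
      = ((C1 ⊗ₖ X1) *ᵥ fun bq : Fin m × Fin N => y (Sum.inr (Sum.inl bq.1), bq.2)) (a, p) := by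
  simp [LamE, E1mat, E2mat, Matrix.mulVec, dotProduct, Fintype.sum_prod_type,
    Fintype.sum_sum_type, add_mul]

lemma lamE_mulVec_inr_inl (b : Fin m) (p : Fin N) :
    (LamE C1 C2 X1 X2 *ᵥ y) (Sum.inr (Sum.inl b), p)
      = ((C2 ⊗ₖ X2) *ᵥ fun cq : Fin n × Fin N => y (Sum.inr (Sum.inr cq.1), cq.2)) (b, p) := by
  simp [LamE, E1mat, E2mat, Matrix.mulVec, dotProduct, Fintype.sum_prod_type,
    Fintype.sum_sum_type, add_mul]

lemma lamE_mulVec_inr_inr (c : Fin n) (p : Fin N) :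
    (LamE C1 C2 X1 X2 *ᵥ y) (Sum.inr (Sum.inr c), p) = 0 := by
  simp [LamE, E1mat, E2mat, Matrix.mulVec, dotProduct, Fintype.sum_prod_type,
    Fintype.sum_sum_type, add_mul]

lemma dot_lamE :
    star y ⬝ᵥ (LamE C1 C2 X1 X2 *ᵥ y)
      = (star (fun aq : Fin k × Fin N => y (Sum.inl aq.1, aq.2)) ⬝ᵥ
          ((C1 ⊗ₖ X1) *ᵥ fun bq : Fin m × Fin N => y (Sum.inr (Sum.inl bq.1), bq.2)))
      + (star (fun bq : Fin m × Fin N => y (Sum.inr (Sum.inl bq.1), bq.2)) ⬝ᵥ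
          ((C2 ⊗ₖ X2) *ᵥ fun cq : Fin n × Fin N => y (Sum.inr (Sum.inr cq.1), cq.2))) := by
  rw [dot_split]
  have h1 : (fun aq : Fin k × Fin N => (LamE C1 C2 X1 X2 *ᵥ y) (Sum.inl aq.1, aq.2))
      = ((C1 ⊗ₖ X1) *ᵥ fun bq : Fin m × Fin N => y (Sum.inr (Sum.inl bq.1), bq.2)) := by
    funext aq; exact lamE_mulVec_inl C1 C2 X1 X2 y aq.1 aq.2
  have h2 : (fun bq : Fin m × Fin N => (LamE C1 C2 X1 X2 *ᵥ y) (Sum.inr (Sum.inl bq.1), bq.2))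
      = ((C2 ⊗ₖ X2) *ᵥ fun cq : Fin n × Fin N => y (Sum.inr (Sum.inr cq.1), cq.2)) := by
    funext bq; exact lamE_mulVec_inr_inl C1 C2 X1 X2 y bq.1 bq.2
  have h3 : (fun cq : Fin n × Fin N => (LamE C1 C2 X1 X2 *ᵥ y) (Sum.inr (Sum.inr cq.1), cq.2))
      = 0 := by
    funext cq; exact lamE_mulVec_inr_inr C1 C2 X1 X2 y cq.1 cq.2
  rw [h1, h2, h3]
  simp

end LamV

open scoped Matrix.Norms.L2Operator in
lemma opNorm_conjT {a b : ℕ} (A : Matrix (Fin a) (Fin b) ℂ) : opNorm Aᴴ = opNorm A := by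
  have h1 : opNorm A = ‖A‖ := rfl
  have h2 : opNorm Aᴴ = ‖Aᴴ‖ := rfl
  rw [h1, h2, Matrix.l2_opNorm_conjTranspose]

lemma kron_conjT {p q r s : Type*} (A : Matrix p q ℂ) (B : Matrix r s ℂ) :
    (A ⊗ₖ B)ᴴ = Aᴴ ⊗ₖ Bᴴ := by
  ext ⟨i, x⟩ ⟨j, z⟩
  simp [Matrix.conjTranspose_apply, mul_comm]

lemma psd_of_herm_re_nonneg {p : Type*} [Fintype p] {M : Matrix p p ℂ} (hH : M.IsHermitian)
    (h : ∀ y, 0 ≤ (star y ⬝ᵥ (M *ᵥ y)).re) : M.PosSemidef := by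
  refine Matrix.PosSemidef.of_dotProduct_mulVec_nonneg hH fun y => ?_
  have him : (star y ⬝ᵥ (M *ᵥ y)).im = 0 := by
    have h1 := dot_herm_star M y
    rw [hH.eq] at h1
    have := congrArg Complex.im h1
    simp only [Complex.star_def, Complex.conj_im] at this
    linarith
  rw [Complex.le_def]
  exact ⟨by simpa using h y, by simp [him]⟩

/-- If `opNorm X ≤ r` then `r² • 1 - XᴴX ⪰ 0`. -/
lemma psd_contraction {a b : ℕ} {X : Matrix (Fin a) (Fin b) ℂ} {r : ℝ}
    (hX : opNorm X ≤ r) : (((r ^ 2 : ℝ) : ℂ) • 1 - Xᴴ * X).PosSemidef := by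
  have hr0 : 0 ≤ r := le_trans (opNorm_nonneg' X) hX
  have hherm : (((r ^ 2 : ℝ) : ℂ) • 1 - Xᴴ * X).IsHermitian := by
    unfold Matrix.IsHermitian
    rw [Matrix.conjTranspose_sub, Matrix.conjTranspose_smul, Matrix.conjTranspose_one,
      Matrix.conjTranspose_mul, Matrix.conjTranspose_conjTranspose]
    simp
  refine psd_of_herm_re_nonneg hherm fun y => ?_
  rw [Matrix.sub_mulVec, dotProduct_sub, Matrix.smul_mulVec, Matrix.one_mulVec,
    dotProduct_smul, dot_self_conjT_mul]
  have hle : nsq (X *ᵥ y) ≤ r ^ 2 * nsq y := by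
    calc nsq (X *ᵥ y) ≤ opNorm X ^ 2 * nsq y := nsq_mulVec_le X y
      _ ≤ r ^ 2 * nsq y := by
          apply mul_le_mul_of_nonneg_right _ (nsq_nonneg y)
          exact pow_le_pow_left₀ (opNorm_nonneg' X) hX 2
  simp only [Complex.sub_re, smul_eq_mul, Complex.re_ofReal_mul]
  have : (star y ⬝ᵥ y).re = nsq y := rfl
  rw [this]
  change 0 ≤ r ^ 2 * nsq y - nsq (X *ᵥ y)
  linarith

lemma sub_kron {p q r s : Type*} (A B : Matrix p q ℂ) (C : Matrix r s ℂ) :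
    (A - B) ⊗ₖ C = A ⊗ₖ C - B ⊗ₖ C := by
  ext ⟨i, x⟩ ⟨j, z⟩
  simp [sub_mul]

lemma bk_ineq {k m n N : ℕ} {C1 : Matrix (Fin k) (Fin m) ℂ} {C2 : Matrix (Fin m) (Fin n) ℂ}
    {X1 X2 : Matrix (Fin N) (Fin N) ℂ} {r : ℝ}
    (h1 : opNorm X1 ≤ r) (h2 : opNorm X2 ≤ r)
    (hle : ((1 : Matrix (Fin m) (Fin m) ℂ) - (C1ᴴ * C1 + C2 * C2ᴴ)).PosSemidef)
    (v : Fin m × Fin N → ℂ) :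
    nsq ((C1 ⊗ₖ X1) *ᵥ v) + nsq ((C2 ⊗ₖ X2)ᴴ *ᵥ v) ≤ r ^ 2 * nsq v := by
  have hr0 : 0 ≤ r := le_trans (opNorm_nonneg' X1) h1
  set c : ℂ := ((r ^ 2 : ℝ) : ℂ) with hc
  set A := C1 ⊗ₖ X1 with hA
  set B := C2 ⊗ₖ X2 with hB
  set P1 := C1ᴴ * C1 with hP1
  set P2 := C2 * C2ᴴ with hP2
  set S1 := X1ᴴ * X1 with hS1
  set S2 := X2 * X2ᴴ with hS2
  set D := P1 ⊗ₖ (c • 1 - S1) + P2 ⊗ₖ (c • 1 - S2)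
      + c • (((1 : Matrix (Fin m) (Fin m) ℂ) - (P1 + P2)) ⊗ₖ (1 : Matrix (Fin N) (Fin N) ℂ))
      with hD
  have hT1 : (c • 1 - S1).PosSemidef := psd_contraction h1
  have hT2 : (c • 1 - S2).PosSemidef := by
    have := psd_contraction (X := X2ᴴ) (r := r) (by rw [opNorm_conjT]; exact h2)
    rwa [Matrix.conjTranspose_conjTranspose] at this
  have hDpsd : D.PosSemidef := by
    refine Matrix.PosSemidef.add (Matrix.PosSemidef.add ?_ ?_) ?_
    · exact psd_kron (Matrix.posSemidef_conjTranspose_mul_self C1) hT1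
    · exact psd_kron (Matrix.posSemidef_self_mul_conjTranspose C2) hT2
    · exact psd_smul (by positivity) (psd_kron hle Matrix.PosSemidef.one)
  have hId : Aᴴ * A + B * Bᴴ + D = c • 1 := by
    have hAA : Aᴴ * A = P1 ⊗ₖ S1 := by
      rw [hA, kron_conjT, ← Matrix.mul_kronecker_mul]
    have hBB : B * Bᴴ = P2 ⊗ₖ S2 := by
      rw [hB, kron_conjT, ← Matrix.mul_kronecker_mul]
    rw [hAA, hBB, hD]
    have e1 : P1 ⊗ₖ S1 + P1 ⊗ₖ (c • 1 - S1) = c • (P1 ⊗ₖ (1 : Matrix (Fin N) (Fin N) ℂ)) := by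
      rw [← Matrix.kronecker_add, add_sub_cancel, Matrix.kronecker_smul]
    have e2 : P2 ⊗ₖ S2 + P2 ⊗ₖ (c • 1 - S2) = c • (P2 ⊗ₖ (1 : Matrix (Fin N) (Fin N) ℂ)) := by
      rw [← Matrix.kronecker_add, add_sub_cancel, Matrix.kronecker_smul]
    have e3 : c • (((1 : Matrix (Fin m) (Fin m) ℂ) - (P1 + P2)) ⊗ₖ (1 : Matrix (Fin N) (Fin N) ℂ))
        = c • (1 : Matrix (Fin m × Fin N) (Fin m × Fin N) ℂ)
          - c • (P1 ⊗ₖ (1 : Matrix (Fin N) (Fin N) ℂ))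
          - c • (P2 ⊗ₖ (1 : Matrix (Fin N) (Fin N) ℂ)) := by
      rw [sub_kron, Matrix.add_kronecker, Matrix.one_kronecker_one]
      rw [smul_sub, smul_add]
      abel
    calc P1 ⊗ₖ S1 + P2 ⊗ₖ S2 + (P1 ⊗ₖ (c • 1 - S1) + P2 ⊗ₖ (c • 1 - S2)
          + c • (((1 : Matrix (Fin m) (Fin m) ℂ) - (P1 + P2)) ⊗ₖ (1 : Matrix (Fin N) (Fin N) ℂ)))
        = (P1 ⊗ₖ S1 + P1 ⊗ₖ (c • 1 - S1)) + (P2 ⊗ₖ S2 + P2 ⊗ₖ (c • 1 - S2))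
          + c • (((1 : Matrix (Fin m) (Fin m) ℂ) - (P1 + P2)) ⊗ₖ (1 : Matrix (Fin N) (Fin N) ℂ)) := by
          abel
      _ = c • 1 := by rw [e1, e2, e3]; abel
  have key : (star v ⬝ᵥ ((Aᴴ * A) *ᵥ v)).re + (star v ⬝ᵥ ((B * Bᴴ) *ᵥ v)).re
      + (star v ⬝ᵥ (D *ᵥ v)).re = r ^ 2 * nsq v := by
    have := congrArg (fun M => (star v ⬝ᵥ (M *ᵥ v)).re) hId
    simp only [Matrix.add_mulVec, dotProduct_add, Complex.add_re] at this
    rw [this, Matrix.smul_mulVec, Matrix.one_mulVec, dotProduct_smul]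
    simp only [smul_eq_mul, hc, Complex.re_ofReal_mul]
    rfl
  have hDnn : 0 ≤ (star v ⬝ᵥ (D *ᵥ v)).re := by
    have := hDpsd.re_dotProduct_nonneg v
    simpa using this
  have hA2 : (star v ⬝ᵥ ((Aᴴ * A) *ᵥ v)).re = nsq (A *ᵥ v) := by
    rw [dot_self_conjT_mul]; rfl
  have hB2 : (star v ⬝ᵥ ((B * Bᴴ) *ᵥ v)).re = nsq (Bᴴ *ᵥ v) := by
    rw [dot_self_mul_conjT]; rfl
  rw [hA2, hB2] at key
  linarith

lemma dot_self_im {p : Type*} [Fintype p] (x : p → ℂ) : (star x ⬝ᵥ x).im = 0 := by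
  have := dotProduct_star_self_nonneg x
  rw [Complex.le_def] at this
  simpa using this.2.symm

lemma dot_re_comm {p : Type*} [Fintype p] (x y : p → ℂ) :
    (star x ⬝ᵥ y).re = (star y ⬝ᵥ x).re := by
  rw [Matrix.star_dotProduct (v := y)]
  simp [Complex.star_def]

lemma kron_mulVec_tensor {a b N : ℕ} (C : Matrix (Fin a) (Fin b) ℂ)
    (X : Matrix (Fin N) (Fin N) ℂ) (g : Fin b → ℂ) (ξ : Fin N → ℂ) :
    (C ⊗ₖ X) *ᵥ (fun bq : Fin b × Fin N => g bq.1 * ξ bq.2)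
      = fun aq : Fin a × Fin N => (C *ᵥ g) aq.1 * (X *ᵥ ξ) aq.2 := by
  funext aq
  simp only [Matrix.mulVec, dotProduct, Matrix.kroneckerMap_apply, Fintype.sum_prod_type,
    Finset.mul_sum, Finset.sum_mul]
  rw [Finset.sum_comm]
  apply Finset.sum_congr rfl; intro i _
  apply Finset.sum_congr rfl; intro j _
  ring

lemma dot_tensor_s11 {b N : ℕ} (g g' : Fin b → ℂ) (ξ ξ' : Fin N → ℂ) :
    (star (fun bq : Fin b × Fin N => g bq.1 * ξ bq.2) ⬝ᵥ (fun bq => g' bq.1 * ξ' bq.2))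
      = (star g ⬝ᵥ g') * (star ξ ⬝ᵥ ξ') := by
  simp only [dotProduct, Pi.star_apply, Fintype.sum_prod_type, Finset.mul_sum, Finset.sum_mul]
  rw [Finset.sum_comm]
  apply Finset.sum_congr rfl; intro i _
  apply Finset.sum_congr rfl; intro j _
  simp [star_mul']; ring

lemma nsq_tensor {b N : ℕ} (g : Fin b → ℂ) (ξ : Fin N → ℂ) :
    nsq (fun bq : Fin b × Fin N => g bq.1 * ξ bq.2) = nsq g * nsq ξ := by
  unfold nsq
  rw [dot_tensor_s11, Complex.mul_re, dot_self_im, dot_self_im]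
  ring

lemma fw1 {k m n N : ℕ} (hm : 0 < m) (hN : 0 < N)
    {C1 : Matrix (Fin k) (Fin m) ℂ} {C2 : Matrix (Fin m) (Fin n) ℂ}
    {X1 X2 : Matrix (Fin N) (Fin N) ℂ} (hnC1 : opNorm C1 = 1)
    (hpos : (1 - LamE C1 C2 X1 X2 - (LamE C1 C2 X1 X2)ᴴ).PosDef) :
    opNorm X1 < 1 := by
  obtain ⟨g, hg1, hg2⟩ := exists_nsq_attain hm C1
  obtain ⟨ξ, hξ1, hξ2⟩ := exists_nsq_attain hN X1
  set v : Fin m × Fin N → ℂ := fun bq => g bq.1 * ξ bq.2 with hv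
  set u : Fin k × Fin N → ℂ := (C1 ⊗ₖ X1) *ᵥ v with hu
  set y : ((Fin k ⊕ Fin m ⊕ Fin n) × Fin N) → ℂ := fun ip =>
    Sum.casesOn ip.1 (fun a => u (a, ip.2))
      (fun j => Sum.casesOn j (fun b => v (b, ip.2)) (fun _ => 0)) with hy
  have hvns : nsq v = 1 := by rw [hv, nsq_tensor, hg1, hξ1]; ring
  have hy0 : y ≠ 0 := by
    intro h
    have : v = 0 := by
      funext bq
      have := congrFun h (Sum.inr (Sum.inl bq.1), bq.2)
      simpa [hy] using this
    rw [this] at hvns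
    simp [nsq] at hvns
  have hq := hpos.re_dotProduct_pos hy0
  rw [RCLike.re_to_complex] at hq
  rw [quad_re, nsq_split, dot_lamE] at hq
  have e1 : (fun aq : Fin k × Fin N => y (Sum.inl aq.1, aq.2)) = u := rfl
  have e2 : (fun bq : Fin m × Fin N => y (Sum.inr (Sum.inl bq.1), bq.2)) = v := rfl
  have e3 : (fun cq : Fin n × Fin N => y (Sum.inr (Sum.inr cq.1), cq.2))
      = (0 : (Fin n × Fin N) → ℂ) := rfl
  rw [e1, e2, e3] at hq
  have huns : nsq u = opNorm X1 ^ 2 := by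
    rw [hu, hv, kron_mulVec_tensor, nsq_tensor, hg2, hξ2, hnC1]
    ring
  have hz : nsq (0 : (Fin n × Fin N) → ℂ) = 0 := by simp [nsq]
  rw [← hu] at hq
  simp only [Matrix.mulVec_zero, dotProduct_zero, add_zero] at hq
  have hre : (star u ⬝ᵥ u).re = nsq u := rfl
  rw [hre, hz, hvns, huns] at hq
  have h2 : opNorm X1 ^ 2 < 1 := by linarith
  exact (pow_lt_one_iff_of_nonneg (opNorm_nonneg' X1) (by norm_num)).mp h2

lemma fw2 {k m n N : ℕ} (hn : 0 < n) (hN : 0 < N)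
    {C1 : Matrix (Fin k) (Fin m) ℂ} {C2 : Matrix (Fin m) (Fin n) ℂ}
    {X1 X2 : Matrix (Fin N) (Fin N) ℂ} (hnC2 : opNorm C2 = 1)
    (hpos : (1 - LamE C1 C2 X1 X2 - (LamE C1 C2 X1 X2)ᴴ).PosDef) :
    opNorm X2 < 1 := by
  obtain ⟨g, hg1, hg2⟩ := exists_nsq_attain hn C2
  obtain ⟨ξ, hξ1, hξ2⟩ := exists_nsq_attain hN X2
  set w : Fin n × Fin N → ℂ := fun cq => g cq.1 * ξ cq.2 with hw
  set v : Fin m × Fin N → ℂ := (C2 ⊗ₖ X2) *ᵥ w with hv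
  set y : ((Fin k ⊕ Fin m ⊕ Fin n) × Fin N) → ℂ := fun ip =>
    Sum.casesOn ip.1 (fun _ => 0)
      (fun j => Sum.casesOn j (fun b => v (b, ip.2)) (fun c => w (c, ip.2))) with hy
  have hwns : nsq w = 1 := by rw [hw, nsq_tensor, hg1, hξ1]; ring
  have hy0 : y ≠ 0 := by
    intro h
    have : w = 0 := by
      funext cq
      have := congrFun h (Sum.inr (Sum.inr cq.1), cq.2)
      simpa [hy] using this
    rw [this] at hwns
    simp [nsq] at hwns
  have hq := hpos.re_dotProduct_pos hy0
  rw [RCLike.re_to_complex] at hq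
  rw [quad_re, nsq_split, dot_lamE] at hq
  have e1 : (fun aq : Fin k × Fin N => y (Sum.inl aq.1, aq.2))
      = (0 : (Fin k × Fin N) → ℂ) := rfl
  have e2 : (fun bq : Fin m × Fin N => y (Sum.inr (Sum.inl bq.1), bq.2)) = v := rfl
  have e3 : (fun cq : Fin n × Fin N => y (Sum.inr (Sum.inr cq.1), cq.2)) = w := rfl
  rw [e1, e2, e3] at hq
  have hvns : nsq v = opNorm X2 ^ 2 := by
    rw [hv, hw, kron_mulVec_tensor, nsq_tensor, hg2, hξ2, hnC2]
    ring
  have hz : nsq (0 : (Fin k × Fin N) → ℂ) = 0 := by simp [nsq]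
  rw [← hv] at hq
  have hzs : star (0 : (Fin k × Fin N) → ℂ) = 0 := star_zero _
  rw [hzs] at hq
  simp only [zero_dotProduct, zero_add] at hq
  have hre : (star v ⬝ᵥ v).re = nsq v := rfl
  rw [hre, hz, hvns, hwns] at hq
  have h2 : opNorm X2 ^ 2 < 1 := by linarith
  exact (pow_lt_one_iff_of_nonneg (opNorm_nonneg' X2) (by norm_num)).mp h2

lemma bk {k m n N : ℕ} {C1 : Matrix (Fin k) (Fin m) ℂ} {C2 : Matrix (Fin m) (Fin n) ℂ}
    {X1 X2 : Matrix (Fin N) (Fin N) ℂ}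
    (hle : ((1 : Matrix (Fin m) (Fin m) ℂ) - (C1ᴴ * C1 + C2 * C2ᴴ)).PosSemidef)
    (h1 : opNorm X1 < 1) (h2 : opNorm X2 < 1) :
    (1 - LamE C1 C2 X1 X2 - (LamE C1 C2 X1 X2)ᴴ).PosDef := by
  set r : ℝ := max (opNorm X1) (opNorm X2) with hr
  have hr0 : 0 ≤ r := le_trans (opNorm_nonneg' X1) (le_max_left _ _)
  have hr1 : r < 1 := max_lt h1 h2
  have hr2 : r ^ 2 < 1 := pow_lt_one₀ hr0 hr1 (by norm_num)
  have hH : (1 - LamE C1 C2 X1 X2 - (LamE C1 C2 X1 X2)ᴴ).IsHermitian := by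
    unfold Matrix.IsHermitian
    rw [Matrix.conjTranspose_sub, Matrix.conjTranspose_sub, Matrix.conjTranspose_one,
      Matrix.conjTranspose_conjTranspose]
    abel
  refine posdef_of_herm_re hH fun y hy => ?_
  set u : Fin k × Fin N → ℂ := fun aq => y (Sum.inl aq.1, aq.2) with hu
  set v : Fin m × Fin N → ℂ := fun bq => y (Sum.inr (Sum.inl bq.1), bq.2) with hv
  set w : Fin n × Fin N → ℂ := fun cq => y (Sum.inr (Sum.inr cq.1), cq.2) with hw
  set A := C1 ⊗ₖ X1 with hA
  set B := C2 ⊗ₖ X2 with hB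
  rw [quad_re, nsq_split, dot_lamE]
  rw [← hu, ← hv, ← hw, ← hA, ← hB]
  rw [dot_cross B v w, Complex.add_re]
  have F1 : nsq (u - A *ᵥ v) = nsq u - 2 * (star u ⬝ᵥ (A *ᵥ v)).re + nsq (A *ᵥ v) :=
    nsq_sub u (A *ᵥ v)
  have F2 : nsq (w - Bᴴ *ᵥ v) = nsq w - 2 * (star w ⬝ᵥ (Bᴴ *ᵥ v)).re + nsq (Bᴴ *ᵥ v) :=
    nsq_sub w (Bᴴ *ᵥ v)
  have F2' : (star (Bᴴ *ᵥ v) ⬝ᵥ w).re = (star w ⬝ᵥ (Bᴴ *ᵥ v)).re := dot_re_comm _ _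
  have F3 : nsq (A *ᵥ v) + nsq (Bᴴ *ᵥ v) ≤ r ^ 2 * nsq v :=
    bk_ineq (le_max_left _ _) (le_max_right _ _) hle v
  have G1 := nsq_nonneg (u - A *ᵥ v)
  have G2 := nsq_nonneg (w - Bᴴ *ᵥ v)
  have G3 := nsq_nonneg v
  rw [F2'] -- goal cross terms
  by_cases hvz : v = 0
  · have hunz : u ≠ 0 ∨ w ≠ 0 := by
      by_contra hcon
      push_neg at hcon
      apply hy
      funext ip
      obtain ⟨i, p⟩ := ip
      rcases i with a | b | c
      · exact congrFun hcon.1 (a, p)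
      · exact congrFun hvz (b, p)
      · exact congrFun hcon.2 (c, p)
    have hAv : A *ᵥ v = 0 := by rw [hvz, Matrix.mulVec_zero]
    have hBv : Bᴴ *ᵥ v = 0 := by rw [hvz, Matrix.mulVec_zero]
    have c1 : (star u ⬝ᵥ (A *ᵥ v)).re = 0 := by rw [hAv]; simp
    have c2 : (star w ⬝ᵥ (Bᴴ *ᵥ v)).re = 0 := by rw [hBv]; simp
    have hvn : nsq v = 0 := by rw [hvz]; simp [nsq]
    rcases hunz with hu0 | hw0
    · have := nsq_pos hu0
      have := nsq_nonneg w
      rw [c1, c2, hvn]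
      linarith
    · have := nsq_pos hw0
      have := nsq_nonneg u
      rw [c1, c2, hvn]
      linarith
  · have hvp : 0 < nsq v := nsq_pos hvz
    nlinarith [F1, F2, F3, G1, G2]

/-- **Lemma.** If `C₁*C₁ + C₂C₂* ⪯ I_m`, then `𝔓_E[N]` is the free bidisk at level `N`. -/
theorem PE_eq_bidisk {k m n : ℕ} (hk : 0 < k) (hm : 0 < m) (hn : 0 < n)
    (C1 : Matrix (Fin k) (Fin m) ℂ) (C2 : Matrix (Fin m) (Fin n) ℂ)
    (hC1 : C1 ≠ 0) (hC2 : C2 ≠ 0) (hnC1 : opNorm C1 = 1) (hnC2 : opNorm C2 = 1)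
    (hle : ((1 : Matrix (Fin m) (Fin m) ℂ) - (C1ᴴ * C1 + C2 * C2ᴴ)).PosSemidef)
    (N : ℕ) (hN : 0 < N) :
    PE k m n C1 C2 N
      = {X : Matrix (Fin N) (Fin N) ℂ × Matrix (Fin N) (Fin N) ℂ |
          opNorm X.1 < 1 ∧ opNorm X.2 < 1} := by
  ext ⟨X1, X2⟩
  constructor
  · intro h
    exact ⟨fw1 hm hN hnC1 h, fw2 hn hN hnC2 h⟩
  · rintro ⟨h1, h2⟩
    exact bk hle h1 h2
end

section
/- For t = (t₁, t₂) ∈ ℂ², let X̃(t) = ( [[0, t₁],[0, 0]], [[0, t₂],[0, 0]] ) ∈ M₂(ℂ)². Then X̃(t) ∈ 𝔓_E[2] if and only if |t₁| < 1 and |t₂| < 1. -/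
open Matrix Kronecker
open scoped ComplexOrder

lemma conj_quad {ι : Type*} [Fintype ι] (A : Matrix ι ι ℂ) (v : ι → ℂ) :
    star v ⬝ᵥ (Aᴴ *ᵥ v) = starRingEnd ℂ (star v ⬝ᵥ (A *ᵥ v)) := by
  simp only [dotProduct, mulVec, dotProduct, Matrix.conjTranspose_apply, Pi.star_apply,
    map_sum, _root_.map_mul, Finset.mul_sum]
  rw [Finset.sum_comm]
  refine Finset.sum_congr rfl fun i _ => Finset.sum_congr rfl fun j _ => ?_
  simp only [RingHom.coe_coe, starRingEnd_apply]
  rw [star_star]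
  ring

lemma quad_E1 (k m n : ℕ) (C1 : Matrix (Fin k) (Fin m) ℂ) (t1 : ℂ)
    (v : (Fin k ⊕ Fin m ⊕ Fin n) × Fin 2 → ℂ) :
    star v ⬝ᵥ ((E1mat k m n C1 ⊗ₖ !![0,t1;0,0]) *ᵥ v)
      = t1 * (star (fun a => v (Sum.inl a, 0)) ⬝ᵥ (C1 *ᵥ fun b => v (Sum.inr (Sum.inl b), 1))) := by
  simp only [dotProduct, mulVec, kroneckerMap_apply, Fintype.sum_prod_type, Fintype.sum_sum_type,
    Fin.sum_univ_two, E1mat, Matrix.of_apply, Pi.star_apply, Finset.mul_sum, Finset.sum_add_distrib]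
  simp [Matrix.cons_val_zero, Matrix.cons_val_one, Finset.mul_sum]
  exact Finset.sum_congr rfl fun a _ => Finset.sum_congr rfl fun b _ => by ring

lemma quad_E2 (k m n : ℕ) (C2 : Matrix (Fin m) (Fin n) ℂ) (t2 : ℂ)
    (v : (Fin k ⊕ Fin m ⊕ Fin n) × Fin 2 → ℂ) :
    star v ⬝ᵥ ((E2mat k m n C2 ⊗ₖ !![0,t2;0,0]) *ᵥ v)
      = t2 * (star (fun a => v (Sum.inr (Sum.inl a), 0)) ⬝ᵥ (C2 *ᵥ fun b => v (Sum.inr (Sum.inr b), 1))) := by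
  simp only [dotProduct, mulVec, kroneckerMap_apply, Fintype.sum_prod_type, Fintype.sum_sum_type,
    Fin.sum_univ_two, E2mat, Matrix.of_apply, Pi.star_apply, Finset.mul_sum, Finset.sum_add_distrib]
  simp [Matrix.cons_val_zero, Matrix.cons_val_one, Finset.mul_sum]
  exact Finset.sum_congr rfl fun a _ => Finset.sum_congr rfl fun b _ => by ring

lemma sum_normSq (ι : Type*) [Fintype ι] (v : ι → ℂ) :
    star v ⬝ᵥ v = ((∑ q, ‖v q‖^2 : ℝ) : ℂ) := by
  push_cast
  refine Finset.sum_congr rfl fun q _ => ?_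
  have h : star (v q) = (starRingEnd ℂ) (v q) := rfl
  rw [Pi.star_apply, mul_comm, h, Complex.mul_conj, Complex.normSq_eq_norm_sq]
  push_cast; ring

lemma quadform (k m n : ℕ) (C1 : Matrix (Fin k) (Fin m) ℂ) (C2 : Matrix (Fin m) (Fin n) ℂ)
    (t1 t2 : ℂ) (v : (Fin k ⊕ Fin m ⊕ Fin n) × Fin 2 → ℂ) :
    star v ⬝ᵥ ((1 - LamE C1 C2 !![0,t1;0,0] !![0,t2;0,0]
        - (LamE C1 C2 !![0,t1;0,0] !![0,t2;0,0])ᴴ) *ᵥ v)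
      = ((∑ q, ‖v q‖^2 : ℝ) : ℂ)
        - (t1 * (star (fun a => v (Sum.inl a, 0)) ⬝ᵥ (C1 *ᵥ fun b => v (Sum.inr (Sum.inl b), 1)))
           + t2 * (star (fun a => v (Sum.inr (Sum.inl a), 0)) ⬝ᵥ (C2 *ᵥ fun b => v (Sum.inr (Sum.inr b), 1))))
        - starRingEnd ℂ
            (t1 * (star (fun a => v (Sum.inl a, 0)) ⬝ᵥ (C1 *ᵥ fun b => v (Sum.inr (Sum.inl b), 1)))
             + t2 * (star (fun a => v (Sum.inr (Sum.inl a), 0)) ⬝ᵥ (C2 *ᵥ fun b => v (Sum.inr (Sum.inr b), 1)))) := by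
  rw [Matrix.sub_mulVec, Matrix.sub_mulVec, dotProduct_sub, dotProduct_sub, Matrix.one_mulVec,
    conj_quad, sum_normSq]
  congr 2 <;>
  · unfold LamE
    rw [Matrix.add_mulVec, dotProduct_add, quad_E1, quad_E2]

lemma dot_bound {a b : ℕ} (A : Matrix (Fin a) (Fin b) ℂ) (x : Fin a → ℂ) (y : Fin b → ℂ) :
    ‖star x ⬝ᵥ (A *ᵥ y)‖
      ≤ opNorm A * Real.sqrt (∑ i, ‖x i‖^2) * Real.sqrt (∑ j, ‖y j‖^2) := by
  set x' : EuclideanSpace ℂ (Fin a) := (WithLp.equiv 2 _).symm x with hx'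
  set y' : EuclideanSpace ℂ (Fin b) := (WithLp.equiv 2 _).symm y with hy'
  have hx : ‖x'‖ = Real.sqrt (∑ i, ‖x i‖^2) := by
    rw [EuclideanSpace.norm_eq]; rfl
  have hy : ‖y'‖ = Real.sqrt (∑ j, ‖y j‖^2) := by
    rw [EuclideanSpace.norm_eq]; rfl
  have key : star x ⬝ᵥ (A *ᵥ y) = inner ℂ x' (Matrix.toEuclideanLin A y') := by
    rw [EuclideanSpace.inner_eq_star_dotProduct, dotProduct_comm]; rfl
  rw [key]
  calc ‖(inner ℂ x' (Matrix.toEuclideanLin A y') : ℂ)‖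
      ≤ ‖x'‖ * ‖Matrix.toEuclideanLin A y'‖ := norm_inner_le_norm _ _
    _ ≤ ‖x'‖ * (opNorm A * ‖y'‖) := by
        apply mul_le_mul_of_nonneg_left _ (norm_nonneg _)
        exact (LinearMap.toContinuousLinearMap (Matrix.toEuclideanLin A)).le_opNorm y'
    _ = opNorm A * Real.sqrt (∑ i, ‖x i‖^2) * Real.sqrt (∑ j, ‖y j‖^2) := by
        rw [hx, hy]; ring


lemma exists_attain {a b : ℕ} (hb : 0 < b) (A : Matrix (Fin a) (Fin b) ℂ) (hA : opNorm A = 1) :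
    ∃ (x : Fin a → ℂ) (y : Fin b → ℂ), (∑ i, ‖x i‖^2) = 1 ∧ (∑ j, ‖y j‖^2) = 1 ∧
      star x ⬝ᵥ (A *ᵥ y) = 1 := by
  set T := LinearMap.toContinuousLinearMap (Matrix.toEuclideanLin A) with hT
  have hne : (Metric.sphere (0 : EuclideanSpace ℂ (Fin b)) 1).Nonempty := by
    refine ⟨EuclideanSpace.single ⟨0, hb⟩ 1, ?_⟩
    simp [mem_sphere_zero_iff_norm, EuclideanSpace.norm_single]
  obtain ⟨y₀, hy₀mem, hy₀max⟩ :=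
    (isCompact_sphere (0 : EuclideanSpace ℂ (Fin b)) 1).exists_isMaxOn hne
      ((continuous_norm.comp T.continuous).continuousOn)
  have hy₀ : ‖y₀‖ = 1 := mem_sphere_zero_iff_norm.mp hy₀mem
  have hTy₀ : ‖T y₀‖ = 1 := by
    apply le_antisymm
    · calc ‖T y₀‖ ≤ ‖T‖ * ‖y₀‖ := T.le_opNorm y₀
        _ = 1 := by rw [hy₀, mul_one]; exact hA
    · rw [show (1:ℝ) = opNorm A from hA.symm]
      refine ContinuousLinearMap.opNorm_le_bound T (norm_nonneg _) fun z => ?_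
      rcases eq_or_ne z 0 with rfl | hz
      · simp
      · have hzn : (0:ℝ) < ‖z‖ := norm_pos_iff.mpr hz
        have hu : ((((‖z‖)⁻¹ : ℝ) : ℂ) • z) ∈ Metric.sphere (0 : EuclideanSpace ℂ (Fin b)) 1 := by
          simp only [mem_sphere_zero_iff_norm, norm_smul, Complex.norm_real, norm_inv,
            Real.norm_eq_abs, abs_of_pos hzn]
          exact inv_mul_cancel₀ hzn.ne'
        have h2 : ‖T ((((‖z‖)⁻¹ : ℝ) : ℂ) • z)‖ ≤ ‖T y₀‖ := hy₀max hu
        rw [_root_.map_smul, norm_smul, Complex.norm_real, norm_inv, Real.norm_eq_abs,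
          abs_of_pos hzn] at h2
        calc ‖T z‖ = ‖z‖ * (‖z‖⁻¹ * ‖T z‖) := by field_simp
          _ ≤ ‖z‖ * ‖T y₀‖ := by nlinarith [norm_nonneg (T z)]
          _ = ‖T y₀‖ * ‖z‖ := mul_comm _ _
  obtain ⟨x', hx, hx1⟩ : ∃ x' : EuclideanSpace ℂ (Fin a),
      x' = Matrix.toEuclideanLin A y₀ ∧ ‖x'‖ = 1 := ⟨_, rfl, hTy₀⟩
  clear hTy₀ hy₀max hy₀mem hne hT
  refine ⟨WithLp.equiv 2 _ x', WithLp.equiv 2 _ y₀, ?_, ?_, ?_⟩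
  · simp only [WithLp.equiv_apply]
    have h := EuclideanSpace.norm_eq x'
    rw [hx1] at h
    nlinarith [Real.sq_sqrt (Finset.sum_nonneg fun i (_ : i ∈ Finset.univ) => sq_nonneg ‖x' i‖), h]
  · simp only [WithLp.equiv_apply]
    have h := EuclideanSpace.norm_eq y₀
    rw [hy₀] at h
    nlinarith [Real.sq_sqrt (Finset.sum_nonneg fun j (_ : j ∈ Finset.univ) => sq_nonneg ‖y₀ j‖), h]
  · have key : star (WithLp.equiv 2 _ x') ⬝ᵥ (A *ᵥ (WithLp.equiv 2 _ y₀))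
        = (inner ℂ x' (Matrix.toEuclideanLin A y₀) : ℂ) := by
      rw [EuclideanSpace.inner_eq_star_dotProduct, dotProduct_comm]; rfl
    rw [key, ← hx, inner_self_eq_norm_sq_to_K, hx1]
    norm_num



lemma sum_blocks (k m n : ℕ) (f : (Fin k ⊕ Fin m ⊕ Fin n) × Fin 2 → ℝ) :
    ∑ q, f q = ((∑ a, f (Sum.inl a, 0)) + (∑ a, f (Sum.inl a, 1)))
      + ((∑ b, f (Sum.inr (Sum.inl b), 0)) + (∑ b, f (Sum.inr (Sum.inl b), 1)))
      + ((∑ c, f (Sum.inr (Sum.inr c), 0)) + (∑ c, f (Sum.inr (Sum.inr c), 1))) := by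
  rw [Fintype.sum_prod_type]
  simp [Fintype.sum_sum_type, Fin.sum_univ_two, Finset.sum_add_distrib]
  ring

lemma pos_aux (t1 t2 : ℂ) (Q1 Q2 : ℂ) (S su1 sw1 su2 sw2 : ℝ)
    (ht1 : ‖t1‖ < 1) (ht2 : ‖t2‖ < 1)
    (hQ1 : ‖Q1‖ ≤ Real.sqrt su1 * Real.sqrt sw1)
    (hQ2 : ‖Q2‖ ≤ Real.sqrt su2 * Real.sqrt sw2)
    (h1 : 0 ≤ su1) (h2 : 0 ≤ sw1) (h3 : 0 ≤ su2) (h4 : 0 ≤ sw2)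
    (hle : su1 + sw1 + su2 + sw2 ≤ S) (hS : 0 < S) :
    (0:ℂ) < (S : ℂ) - (t1 * Q1 + t2 * Q2) - starRingEnd ℂ (t1 * Q1 + t2 * Q2) := by
  set T : ℂ := t1 * Q1 + t2 * Q2 with hT
  have hsum : (S:ℂ) - T - starRingEnd ℂ T = ((S - 2*T.re : ℝ):ℂ) := by
    rw [sub_sub, Complex.add_conj]; push_cast; ring
  rw [hsum, Complex.zero_lt_real]
  set M : ℝ := max (‖t1‖) (‖t2‖) with hM
  have hM0 : 0 ≤ M := le_trans (norm_nonneg t1) (le_max_left _ _)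
  have hM1 : M < 1 := max_lt ht1 ht2
  have h2P1 : 2 * (Real.sqrt su1 * Real.sqrt sw1) ≤ su1 + sw1 := by
    nlinarith [two_mul_le_add_sq (Real.sqrt su1) (Real.sqrt sw1), Real.sq_sqrt h1, Real.sq_sqrt h2]
  have h2P2 : 2 * (Real.sqrt su2 * Real.sqrt sw2) ≤ su2 + sw2 := by
    nlinarith [two_mul_le_add_sq (Real.sqrt su2) (Real.sqrt sw2), Real.sq_sqrt h3, Real.sq_sqrt h4]
  have habsT : ‖T‖ ≤ ‖t1‖ * (Real.sqrt su1 * Real.sqrt sw1)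
      + ‖t2‖ * (Real.sqrt su2 * Real.sqrt sw2) := by
    calc ‖T‖ ≤ ‖t1 * Q1‖ + ‖t2 * Q2‖ := norm_add_le _ _
      _ = ‖t1‖ * ‖Q1‖ + ‖t2‖ * ‖Q2‖ := by
          rw [norm_mul, norm_mul]
      _ ≤ _ := by gcongr <;> positivity
  have key : 2 * T.re ≤ M * S := by
    calc 2 * T.re ≤ 2 * ‖T‖ := by nlinarith [Complex.re_le_norm T]
      _ ≤ ‖t1‖ * (2 * (Real.sqrt su1 * Real.sqrt sw1))
          + ‖t2‖ * (2 * (Real.sqrt su2 * Real.sqrt sw2)) := by nlinarith []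
      _ ≤ ‖t1‖ * (su1 + sw1) + ‖t2‖ * (su2 + sw2) := by
          gcongr <;> positivity
      _ ≤ M * (su1 + sw1) + M * (su2 + sw2) :=
          add_le_add (mul_le_mul_of_nonneg_right (le_max_left _ _) (by positivity))
            (mul_le_mul_of_nonneg_right (le_max_right _ _) (by positivity))
      _ = M * (su1 + sw1 + su2 + sw2) := by ring
      _ ≤ M * S := by gcongr
  nlinarith

/-- **Lemma.** For `t = (t₁, t₂) ∈ ℂ²`, the tuple
`X̃(t) = ([[0,t₁],[0,0]], [[0,t₂],[0,0]])` lies in `𝔓_E[2]` iff `|t₁| < 1` and `|t₂| < 1`. -/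
theorem tXt_mem_PE_iff {k m n : ℕ} (hk : 0 < k) (hm : 0 < m) (hn : 0 < n)
    (C1 : Matrix (Fin k) (Fin m) ℂ) (C2 : Matrix (Fin m) (Fin n) ℂ)
    (hC1 : C1 ≠ 0) (hC2 : C2 ≠ 0) (hnC1 : opNorm C1 = 1) (hnC2 : opNorm C2 = 1)
    (t : ℂ × ℂ) :
    (!![0, t.1; 0, 0], !![0, t.2; 0, 0]) ∈ PE k m n C1 C2 2 ↔
      ‖t.1‖ < 1 ∧ ‖t.2‖ < 1 := by
  simp only [PE, Set.mem_setOf_eq]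
  constructor
  · intro h
    constructor
    · -- |t.1| < 1
      by_cases h0 : t.1 = 0
      · simp [h0]
      obtain ⟨x, y, hx, hy, hxy⟩ := exists_attain hm C1 hnC1
      set c : ℂ := (starRingEnd ℂ) t.1 / (‖t.1‖ : ℂ) with hc
      have habs0 : (0:ℝ) < ‖t.1‖ := norm_pos_iff.mpr h0
      have hcabs : ‖c‖ = 1 := by
        rw [hc, norm_div, Complex.norm_conj, Complex.norm_real, norm_norm,
          div_self habs0.ne']
      have htc : t.1 * c = (‖t.1‖ : ℂ) := by
        rw [hc, mul_div_assoc']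
        rw [Complex.mul_conj, Complex.normSq_eq_norm_sq]
        have : (‖t.1‖ : ℂ) ≠ 0 := by
          exact_mod_cast habs0.ne'
        field_simp
        push_cast; ring
      set v : (Fin k ⊕ Fin m ⊕ Fin n) × Fin 2 → ℂ := fun q =>
        Sum.elim (fun a => if q.2 = 0 then x a else 0)
          (Sum.elim (fun b => if q.2 = 1 then c * y b else 0) fun _ => 0) q.1 with hv
      have hxne : ∃ a, x a ≠ 0 := by
        by_contra hxa
        push_neg at hxa
        have h1 : (∑ i, ‖x i‖^2) = 0 := by simp [hxa]
        rw [hx] at h1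
        norm_num at h1
      obtain ⟨a0, ha0⟩ := hxne
      have hvne : v ≠ 0 := by
        intro h'
        apply ha0
        have := congrFun h' (Sum.inl a0, 0)
        simpa [hv] using this
      have hq := h.dotProduct_mulVec_pos hvne
      rw [quadform] at hq
      have hu1 : (fun a => v (Sum.inl a, 0)) = x := by funext a; simp [hv]
      have hw1 : (fun b => v (Sum.inr (Sum.inl b), 1)) = fun b => c * y b := by
        funext b; simp [hv]
      have hu2 : (fun a => v (Sum.inr (Sum.inl a), 0)) = (0 : Fin m → ℂ) := by
        funext a; simp [hv]
      rw [hu1, hw1, hu2] at hq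
      have hQ1 : star x ⬝ᵥ (C1 *ᵥ fun b => c * y b) = c := by
        have hcy : (fun b => c * y b) = c • y := rfl
        rw [hcy, Matrix.mulVec_smul, dotProduct_smul, hxy, smul_eq_mul, mul_one]
      have hS : (∑ q, ‖v q‖^2) = 2 := by
        rw [sum_blocks]
        have hcy : ∀ b, ‖c * y b‖^2 = ‖y b‖^2 := by
          intro b
          rw [norm_mul, mul_pow, hcabs, one_pow, one_mul]
        have hsum2 : ∑ b, ‖c * y b‖^2 = 1 := by
          rw [← hy]; exact Finset.sum_congr rfl fun b _ => hcy b
        simp only [hv, Sum.elim_inl, Sum.elim_inr, reduceIte, norm_zero, ne_eq,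
          OfNat.ofNat_ne_zero, not_false_eq_true, zero_pow, Finset.sum_const_zero, add_zero,
          zero_add]
        rw [hx, hsum2]
        norm_num
      rw [hQ1, hS, htc] at hq
      simp only [star_zero, zero_dotProduct, mul_zero, add_zero, Complex.conj_ofReal] at hq
      have hcast : ((2:ℝ):ℂ) - (‖t.1‖ : ℂ) - (‖t.1‖ : ℂ)
          = ((2 - 2*‖t.1‖ : ℝ) : ℂ) := by push_cast; ring
      rw [hcast, Complex.zero_lt_real] at hq
      linarith
    · -- |t.2| < 1
      by_cases h0 : t.2 = 0
      · simp [h0]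
      obtain ⟨x, y, hx, hy, hxy⟩ := exists_attain hn C2 hnC2
      set c : ℂ := (starRingEnd ℂ) t.2 / (‖t.2‖ : ℂ) with hc
      have habs0 : (0:ℝ) < ‖t.2‖ := norm_pos_iff.mpr h0
      have hcabs : ‖c‖ = 1 := by
        rw [hc, norm_div, Complex.norm_conj, Complex.norm_real, norm_norm,
          div_self habs0.ne']
      have htc : t.2 * c = (‖t.2‖ : ℂ) := by
        rw [hc, mul_div_assoc']
        rw [Complex.mul_conj, Complex.normSq_eq_norm_sq]
        have : (‖t.2‖ : ℂ) ≠ 0 := by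
          exact_mod_cast habs0.ne'
        field_simp
        push_cast; ring
      set v : (Fin k ⊕ Fin m ⊕ Fin n) × Fin 2 → ℂ := fun q =>
        Sum.elim (fun _ => (0:ℂ))
          (Sum.elim (fun b => if q.2 = 0 then x b else 0)
            (fun d => if q.2 = 1 then c * y d else 0)) q.1 with hv
      have hxne : ∃ a, x a ≠ 0 := by
        by_contra hxa
        push_neg at hxa
        have h1 : (∑ i, ‖x i‖^2) = 0 := by simp [hxa]
        rw [hx] at h1
        norm_num at h1
      obtain ⟨a0, ha0⟩ := hxne
      have hvne : v ≠ 0 := by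
        intro h'
        apply ha0
        have := congrFun h' (Sum.inr (Sum.inl a0), 0)
        simpa [hv] using this
      have hq := h.dotProduct_mulVec_pos hvne
      rw [quadform] at hq
      have hu1 : (fun a => v (Sum.inl a, 0)) = (0 : Fin k → ℂ) := by funext a; simp [hv]
      have hw2 : (fun b => v (Sum.inr (Sum.inr b), 1)) = fun b => c * y b := by
        funext b; simp [hv]
      have hu2 : (fun a => v (Sum.inr (Sum.inl a), 0)) = x := by
        funext a; simp [hv]
      rw [hu1, hw2, hu2] at hq
      have hQ2 : star x ⬝ᵥ (C2 *ᵥ fun b => c * y b) = c := by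
        have hcy : (fun b => c * y b) = c • y := rfl
        rw [hcy, Matrix.mulVec_smul, dotProduct_smul, hxy, smul_eq_mul, mul_one]
      have hS : (∑ q, ‖v q‖^2) = 2 := by
        rw [sum_blocks]
        have hcy : ∀ b, ‖c * y b‖^2 = ‖y b‖^2 := by
          intro b
          rw [norm_mul, mul_pow, hcabs, one_pow, one_mul]
        have hsum2 : ∑ b, ‖c * y b‖^2 = 1 := by
          rw [← hy]; exact Finset.sum_congr rfl fun b _ => hcy b
        simp only [hv, Sum.elim_inl, Sum.elim_inr, reduceIte, norm_zero, ne_eq,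
          OfNat.ofNat_ne_zero, not_false_eq_true, zero_pow, Finset.sum_const_zero, add_zero,
          zero_add]
        rw [hx, hsum2]
        norm_num
      rw [hQ2, hS, htc] at hq
      simp only [star_zero, zero_dotProduct, mul_zero, zero_add, Complex.conj_ofReal] at hq
      have hcast : ((2:ℝ):ℂ) - (‖t.2‖ : ℂ) - (‖t.2‖ : ℂ)
          = ((2 - 2*‖t.2‖ : ℝ) : ℂ) := by push_cast; ring
      rw [hcast, Complex.zero_lt_real] at hq
      linarith
  · rintro ⟨ht1, ht2⟩
    rw [posDef_iff_dotProduct_mulVec]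
    constructor
    · show _ᴴ = _
      simp only [Matrix.conjTranspose_sub, Matrix.conjTranspose_one,
        Matrix.conjTranspose_conjTranspose]
      abel
    · intro v hv
      rw [quadform]
      have hQ1 := dot_bound C1 (fun a => v (Sum.inl a, 0)) (fun b => v (Sum.inr (Sum.inl b), 1))
      rw [hnC1, one_mul] at hQ1
      have hQ2 := dot_bound C2 (fun a => v (Sum.inr (Sum.inl a), 0))
        (fun b => v (Sum.inr (Sum.inr b), 1))
      rw [hnC2, one_mul] at hQ2
      have hsb := sum_blocks k m n (fun q => ‖v q‖^2)
      have e1 : (0:ℝ) ≤ ∑ a, ‖v (Sum.inl a, 1)‖^2 := by positivity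
      have e2 : (0:ℝ) ≤ ∑ d, ‖v (Sum.inr (Sum.inr d), 0)‖^2 := by positivity
      have hS : (0:ℝ) < ∑ q, ‖v q‖^2 := by
        obtain ⟨q, hq⟩ := Function.ne_iff.mp hv
        refine Finset.sum_pos' (fun i _ => by positivity)
          ⟨q, Finset.mem_univ q, pow_pos (norm_pos_iff.mpr hq) 2⟩
      exact pos_aux t.1 t.2 _ _ _ _ _ _ _ ht1 ht2 hQ1 hQ2 (by positivity) (by positivity)
        (by positivity) (by positivity) (by linarith) hS
end
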